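/- arXiv:2511.19754 — 6 statements merged into one kernel-verified Lean document; each statement's English description precedes it below -/
import Mathlib

section
/- Let ℓ, u ∈ ℤⁿ with ℓ ≤ u componentwise, let 𝒳 = {x ∈ ℤⁿ : ℓ ≤ x ≤ u}, let k ≥ 1, and let f₁,…,f_k, g₁,…,g_k : 𝒳 → ℝ all be L♮-convex. Assume there exists h : 𝒳 → ℝ with h(x) = gᵢ(x) − fᵢ(x) for all x ∈ 𝒳 and all i. Define Q′ = {(η, w, x) ∈ ℝᵏ × ℝᵏ × ℝⁿ : x ∈ 𝒳, ηᵢ ≥ gᵢ(x) and wᵢ ≥ fᵢ(x) for all i, and ηᵢ − wᵢ = η_{i′} − w_{i′} for all i, i′}. Then the convex hull of Q′ equals {(η, w, x) ∈ ℝᵏ × ℝᵏ × ℝⁿ : ℓ ≤ x ≤ u componentwise; for every i, (x, ηᵢ) lies in the convex hull of the epigraph {(x′, t) : x′ ∈ 𝒳, t ≥ gᵢ(x′)} and (x, wᵢ) lies in the convex hull of the epigraph {(x′, t) : x′ ∈ 𝒳, t ≥ fᵢ(x′)}; and ηᵢ − wᵢ = η_{i′} − w_{i′} for all i, i′}. 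-/
/-- Membership in the discrete hyperrectangle `𝒳 = {x ∈ ℤⁿ : l ≤ x ≤ u}`. -/
def inBox {n : ℕ} (l u x : Fin n → ℤ) : Prop := ∀ i, l i ≤ x i ∧ x i ≤ u i

/-- The epigraph `{(x, w) ∈ ℝⁿ × ℝ : x ∈ 𝒳, w ≥ f(x)}` viewed inside `ℝⁿ × ℝ`. -/
def epiSet {n : ℕ} (l u : Fin n → ℤ) (f : (Fin n → ℤ) → ℝ) :
    Set ((Fin n → ℝ) × ℝ) :=
  {q | ∃ x : Fin n → ℤ, inBox l u x ∧ q.1 = (fun i => (x i : ℝ)) ∧ f x ≤ q.2}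

/-- L♮-convexity of `f` on the box `{x ∈ ℤⁿ : l ≤ x ≤ u}`. -/
def IsLNatOn {n : ℕ} (l u : Fin n → ℤ) (f : (Fin n → ℤ) → ℝ) : Prop :=
  ∀ x y : Fin n → ℤ, inBox l u x → inBox l u y → ∀ α : ℤ, 0 ≤ α →
    inBox l u (((fun i => x i - α) : Fin n → ℤ) ⊔ y) →
    inBox l u (x ⊓ ((fun i => y i + α) : Fin n → ℤ)) →
    f x + f y ≥ f (((fun i => x i - α) : Fin n → ℤ) ⊔ y)
      + f (x ⊓ ((fun i => y i + α) : Fin n → ℤ))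

namespace S12
variable {n : ℕ}

noncomputable def box (l u : Fin n → ℤ) : Finset (Fin n → ℤ) := Finset.Icc l u

lemma mem_box_iff {l u v : Fin n → ℤ} : v ∈ box l u ↔ inBox l u v := by
  simp [box, Finset.mem_Icc, inBox, Pi.le_def, forall_and]

def exA (y z : Fin n → ℤ) (α : ℤ) : Fin n → ℤ := ((fun i => y i - α) : Fin n → ℤ) ⊔ z
def exB (y z : Fin n → ℤ) (α : ℤ) : Fin n → ℤ := y ⊓ ((fun i => z i + α) : Fin n → ℤ)

lemma exA_apply (y z : Fin n → ℤ) (α : ℤ) (i : Fin n) : exA y z α i = max (y i - α) (z i) := rfl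
lemma exB_apply (y z : Fin n → ℤ) (α : ℤ) (i : Fin n) : exB y z α i = min (y i) (z i + α) := rfl

lemma exAB_add (y z : Fin n → ℤ) (α : ℤ) (i : Fin n) :
    exA y z α i + exB y z α i = y i + z i := by
  rw [exA_apply, exB_apply]
  rcases max_cases (y i - α) (z i) with ⟨h1, h2⟩ | ⟨h1, h2⟩ <;>
    rcases min_cases (y i) (z i + α) with ⟨h3, h4⟩ | ⟨h3, h4⟩ <;> omega

lemma exA_inBox {l u y z : Fin n → ℤ} (hy : inBox l u y) (hz : inBox l u z) {α : ℤ}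
    (hα : 0 ≤ α) : inBox l u (exA y z α) := by
  intro i
  rw [exA_apply]
  rcases hy i with ⟨h1, h2⟩; rcases hz i with ⟨h3, h4⟩
  constructor
  · exact le_max_of_le_right h3
  · exact max_le (by omega) h4

lemma exB_inBox {l u y z : Fin n → ℤ} (hy : inBox l u y) (hz : inBox l u z) {α : ℤ}
    (hα : 0 ≤ α) : inBox l u (exB y z α) := by
  intro i
  rw [exB_apply]
  rcases hy i with ⟨h1, h2⟩; rcases hz i with ⟨h3, h4⟩
  constructor
  · exact le_min h1 (by omega)
  · exact min_le_of_left_le h2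

/-- squares pair inequality -/
lemma sq_pair {m M a b : ℝ} (h1 : m ≤ a) (h2 : a ≤ M) (h3 : a + b = m + M) :
    a ^ 2 + b ^ 2 ≤ m ^ 2 + M ^ 2 := by
  have hb : b = m + M - a := by linarith
  subst hb
  nlinarith [mul_nonneg (sub_nonneg.2 h1) (sub_nonneg.2 h2)]

section weights
variable (l u : Fin n → ℤ)

abbrev BT (l u : Fin n → ℤ) := {v : Fin n → ℤ // v ∈ box l u}

noncomputable def val (w : BT l u → ℝ) (f : (Fin n → ℤ) → ℝ) : ℝ :=
  ∑ v : BT l u, w v * f v.1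

def K (x : Fin n → ℝ) : Set (BT l u → ℝ) :=
  {w | (∀ v, 0 ≤ w v) ∧ (∑ v, w v) = 1 ∧
    ∀ i, val l u w (fun v => (v i : ℝ)) = x i}

lemma val_add_smul (w : BT l u → ℝ) (d : BT l u → ℝ) (f : (Fin n → ℤ) → ℝ) :
    val l u (fun v => w v + d v) f = val l u w f + val l u d f := by
  simp [val, add_mul, Finset.sum_add_distrib]

end weights

/-- first potential -/
noncomputable def phi1 (v : Fin n → ℤ) : ℝ := ∑ i, ((v i : ℝ)) ^ 2
/-- second potential -/
noncomputable def phi2 (v : Fin n → ℤ) : ℝ := (∑ i, ((v i : ℝ))) ^ 2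

lemma p1_coord_le (y z : Fin n → ℤ) {α : ℤ} (hα : 0 ≤ α) (i : Fin n) :
    ((exA y z α i : ℝ)) ^ 2 + ((exB y z α i : ℝ)) ^ 2 ≤ ((y i : ℝ)) ^ 2 + ((z i : ℝ)) ^ 2 := by
  have hsum : exA y z α i + exB y z α i = y i + z i := exAB_add y z α i
  rw [exA_apply, exB_apply] at *
  have hsumR : ((max (y i - α) (z i) : ℤ) : ℝ) + ((min (y i) (z i + α) : ℤ) : ℝ)
      = (y i : ℝ) + (z i : ℝ) := by exact_mod_cast hsum
  rcases le_total (y i) (z i) with h | h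
  · have h1 : ((y i : ℤ) : ℝ) ≤ ((max (y i - α) (z i) : ℤ) : ℝ) := by
      exact_mod_cast le_max_of_le_right h
    have h2 : ((max (y i - α) (z i) : ℤ) : ℝ) ≤ ((z i : ℤ) : ℝ) := by
      exact_mod_cast max_le (show y i - α ≤ z i by omega) le_rfl
    have := sq_pair h1 h2 hsumR
    linarith
  · have h1 : ((z i : ℤ) : ℝ) ≤ ((max (y i - α) (z i) : ℤ) : ℝ) := by
      exact_mod_cast le_max_right (y i - α) (z i)
    have h2 : ((max (y i - α) (z i) : ℤ) : ℝ) ≤ ((y i : ℤ) : ℝ) := by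
      exact_mod_cast max_le (show y i - α ≤ y i by omega) h
    have := sq_pair h1 h2 (by rw [hsumR]; ring)
    linarith

lemma p1_le (y z : Fin n → ℤ) {α : ℤ} (hα : 0 ≤ α) :
    phi1 (exA y z α) + phi1 (exB y z α) ≤ phi1 y + phi1 z := by
  unfold phi1
  rw [← Finset.sum_add_distrib, ← Finset.sum_add_distrib]
  exact Finset.sum_le_sum fun i _ => p1_coord_le y z hα i

lemma p1_lt (y z : Fin n → ℤ) {i0 : Fin n} (hgap : z i0 + 2 ≤ y i0) :
    phi1 (exA y z 1) + phi1 (exB y z 1) < phi1 y + phi1 z := by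
  unfold phi1
  rw [← Finset.sum_add_distrib, ← Finset.sum_add_distrib]
  refine Finset.sum_lt_sum (fun i _ => p1_coord_le y z zero_le_one i) ⟨i0, Finset.mem_univ _, ?_⟩
  rw [exA_apply, exB_apply]
  have h1 : max (y i0 - 1) (z i0) = y i0 - 1 := max_eq_left (by omega)
  have h2 : min (y i0) (z i0 + 1) = z i0 + 1 := min_eq_right (by omega)
  rw [h1, h2]
  have : (z i0 : ℝ) + 2 ≤ (y i0 : ℝ) := by exact_mod_cast hgap
  push_cast
  nlinarith

lemma p1_eq_zero (y z : Fin n → ℤ) :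
    phi1 (exA y z 0) + phi1 (exB y z 0) = phi1 y + phi1 z := by
  unfold phi1
  rw [← Finset.sum_add_distrib, ← Finset.sum_add_distrib]
  refine Finset.sum_congr rfl fun i _ => ?_
  rw [exA_apply, exB_apply]
  rcases le_total (y i) (z i) with h | h
  · rw [max_eq_right (by omega), min_eq_left (by omega)]
    ring
  · rw [max_eq_left (by omega), min_eq_right (by omega)]
    ring

lemma p2_lt (y z : Fin n → ℤ) {i0 j0 : Fin n} (hi : z i0 < y i0) (hj : y j0 < z j0) :
    phi2 y + phi2 z < phi2 (exA y z 0) + phi2 (exB y z 0) := by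
  unfold phi2
  set A : ℝ := ∑ i, ((exA y z 0 i : ℝ)) with hA
  set B : ℝ := ∑ i, ((exB y z 0 i : ℝ)) with hB
  set Y : ℝ := ∑ i, ((y i : ℝ)) with hY
  set Z : ℝ := ∑ i, ((z i : ℝ)) with hZ
  have hAB : A + B = Y + Z := by
    rw [hA, hB, hY, hZ, ← Finset.sum_add_distrib, ← Finset.sum_add_distrib]
    refine Finset.sum_congr rfl fun i _ => ?_
    exact_mod_cast exAB_add y z 0 i
  have hAY : Y < A := by
    rw [hA, hY]
    refine Finset.sum_lt_sum (fun i _ => ?_) ⟨j0, Finset.mem_univ _, ?_⟩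
    · rw [exA_apply]
      have : y i ≤ max (y i - 0) (z i) := le_max_of_le_left (by omega)
      exact_mod_cast this
    · rw [exA_apply]
      have : y j0 < max (y j0 - 0) (z j0) := lt_max_of_lt_right hj
      exact_mod_cast this
  have hAZ : Z < A := by
    rw [hA, hZ]
    refine Finset.sum_lt_sum (fun i _ => ?_) ⟨i0, Finset.mem_univ _, ?_⟩
    · rw [exA_apply]
      have : z i ≤ max (y i - 0) (z i) := le_max_right _ _
      exact_mod_cast this
    · rw [exA_apply]
      have : z i0 < max (y i0 - 0) (z i0) := lt_max_of_lt_left (by omega)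
      exact_mod_cast this
  have hBv : B = Y + Z - A := by linarith
  rw [hBv]
  nlinarith [mul_pos (sub_pos.2 hAY) (sub_pos.2 hAZ)]

variable {l u : Fin n → ℤ}

noncomputable def exch (w : BT l u → ℝ) (y z a b : BT l u) (δ : ℝ) : BT l u → ℝ :=
  fun v => w v + δ * ((if v = a then (1:ℝ) else 0) + (if v = b then 1 else 0)
    - (if v = y then 1 else 0) - (if v = z then 1 else 0))

lemma sum_ind (a : BT l u) (f : (Fin n → ℤ) → ℝ) :
    ∑ v : BT l u, (if v = a then (1:ℝ) else 0) * f v.1 = f a.1 := by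
  rw [Finset.sum_eq_single a]
  · simp
  · intro b _ hb
    simp [hb]
  · intro h
    exact absurd (Finset.mem_univ a) h

lemma val_exch (w : BT l u → ℝ) (y z a b : BT l u) (δ : ℝ) (f : (Fin n → ℤ) → ℝ) :
    val l u (exch w y z a b δ) f
      = val l u w f + δ * (f a.1 + f b.1 - f y.1 - f z.1) := by
  unfold val exch
  simp only [add_mul, Finset.sum_add_distrib, mul_assoc]
  rw [← Finset.mul_sum]
  congr 1
  simp only [sub_mul, add_mul, Finset.sum_sub_distrib, Finset.sum_add_distrib, sum_ind]

lemma sum_exch (w : BT l u → ℝ) (y z a b : BT l u) (δ : ℝ) :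
    ∑ v, exch w y z a b δ v = ∑ v, w v := by
  have h := val_exch w y z a b δ (fun _ => 1)
  simpa [val] using h

lemma exch_nonneg (w : BT l u → ℝ) (hw : ∀ v, 0 ≤ w v) (y z a b : BT l u) (hyz : y ≠ z)
    {δ : ℝ} (hδ0 : 0 ≤ δ) (hδy : δ ≤ w y) (hδz : δ ≤ w z) (v : BT l u) :
    0 ≤ exch w y z a b δ v := by
  unfold exch
  have ha : (0:ℝ) ≤ if v = a then 1 else 0 := by split_ifs <;> norm_num
  have hb : (0:ℝ) ≤ if v = b then 1 else 0 := by split_ifs <;> norm_num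
  by_cases hvy : v = y
  · subst hvy
    rw [if_pos rfl, if_neg hyz]
    nlinarith [hw v]
  · rw [if_neg hvy]
    by_cases hvz : v = z
    · subst hvz
      rw [if_pos rfl]
      nlinarith [hw v]
    · rw [if_neg hvz]
      nlinarith [hw v]

lemma exch_mem_K {x : Fin n → ℝ} {w : BT l u → ℝ} (hw : w ∈ K l u x) (y z a b : BT l u)
    (hyz : y ≠ z) {δ : ℝ} (hδ0 : 0 ≤ δ) (hδy : δ ≤ w y) (hδz : δ ≤ w z)
    (hab : ∀ i, a.1 i + b.1 i = y.1 i + z.1 i) :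
    exch w y z a b δ ∈ K l u x := by
  obtain ⟨h1, h2, h3⟩ := hw
  refine ⟨exch_nonneg w h1 y z a b hyz hδ0 hδy hδz, ?_, ?_⟩
  · rw [sum_exch, h2]
  · intro i
    rw [val_exch]
    have hc : ((a.1 i : ℝ)) + (b.1 i : ℝ) = (y.1 i : ℝ) + (z.1 i : ℝ) := by
      exact_mod_cast hab i
    have : ((a.1 i : ℝ)) + (b.1 i : ℝ) - (y.1 i : ℝ) - (z.1 i : ℝ) = 0 := by linarith
    rw [this, mul_zero, add_zero]
    exact h3 i

lemma continuous_val (f : (Fin n → ℤ) → ℝ) : Continuous (fun w : BT l u → ℝ => val l u w f) :=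
  continuous_finset_sum _ fun v _ => (continuous_apply v).mul continuous_const

lemma isClosed_K (x : Fin n → ℝ) : IsClosed (K l u x) := by
  have h1 : IsClosed {w : BT l u → ℝ | ∀ v, 0 ≤ w v} := by
    have : {w : BT l u → ℝ | ∀ v, 0 ≤ w v} = ⋂ v, {w | 0 ≤ w v} := by
      ext w; simp
    rw [this]
    exact isClosed_iInter fun v => isClosed_le continuous_const (continuous_apply v)
  have h2 : IsClosed {w : BT l u → ℝ | (∑ v, w v) = 1} :=
    isClosed_eq (continuous_finset_sum _ fun v _ => continuous_apply v) continuous_const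
  have h3 : IsClosed {w : BT l u → ℝ | ∀ i, val l u w (fun v => (v i : ℝ)) = x i} := by
    have : {w : BT l u → ℝ | ∀ i, val l u w (fun v => (v i : ℝ)) = x i}
        = ⋂ i, {w | val l u w (fun v => (v i : ℝ)) = x i} := by
      ext w; simp
    rw [this]
    exact isClosed_iInter fun i => isClosed_eq (continuous_val _) continuous_const
  have hK : K l u x = {w : BT l u → ℝ | ∀ v, 0 ≤ w v} ∩
      ({w | (∑ v, w v) = 1} ∩ {w | ∀ i, val l u w (fun v => (v i : ℝ)) = x i}) := by
    ext w
    simp only [K, Set.mem_setOf_eq, Set.mem_inter_iff]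
  rw [hK]
  exact h1.inter (h2.inter h3)

lemma isCompact_K (x : Fin n → ℝ) : IsCompact (K l u x) := by
  refine (isCompact_closedBall (0 : BT l u → ℝ) 1).of_isClosed_subset (isClosed_K x) ?_
  intro w hw
  obtain ⟨h1, h2, _⟩ := hw
  rw [Metric.mem_closedBall, dist_zero_right]
  refine (pi_norm_le_iff_of_nonneg zero_le_one).2 fun v => ?_
  rw [Real.norm_eq_abs, abs_of_nonneg (h1 v)]
  calc w v ≤ ∑ v', w v' := Finset.single_le_sum (fun v' _ => h1 v') (Finset.mem_univ v)
  _ = 1 := h2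

lemma argmin_step {E : Type*} [TopologicalSpace E] {K : Set E} (hK : IsCompact K)
    (hne : K.Nonempty) (φ : E → ℝ) (hφ : Continuous φ) :
    ∃ K' : Set E, K' ⊆ K ∧ IsCompact K' ∧ K'.Nonempty ∧
      (∀ w ∈ K', ∀ w'' ∈ K, φ w ≤ φ w'') ∧
      (∀ w ∈ K', ∀ w'' ∈ K, φ w'' ≤ φ w → w'' ∈ K') := by
  obtain ⟨w0, hw0K, hw0min⟩ := hK.exists_isMinOn hne hφ.continuousOn
  refine ⟨{w ∈ K | φ w ≤ φ w0}, fun w hw => hw.1, ?_, ⟨w0, hw0K, le_rfl⟩, ?_, ?_⟩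
  · exact hK.inter_right (isClosed_le hφ continuous_const)
  · intro w hw w'' hw''
    exact hw.2.trans (hw0min hw'')
  · intro w hw w'' hw'' hle
    exact ⟨hw'', hle.trans hw.2⟩

def PW (μ : BT l u → ℝ) : Prop := ∀ v w : BT l u, μ v ≠ 0 → μ w ≠ 0 →
  (v.1 ≤ w.1 ∨ w.1 ≤ v.1) ∧ ∀ i, |v.1 i - w.1 i| ≤ 1

lemma exists_good (x : Fin n → ℝ) (hne : (K l u x).Nonempty) {f : (Fin n → ℤ) → ℝ}
    (hf : IsLNatOn l u f) :
    ∃ μ ∈ K l u x, (∀ w ∈ K l u x, val l u μ f ≤ val l u w f) ∧ PW μ := by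
  obtain ⟨K1, hK1sub, hK1c, hK1ne, hK1min, hK1cl⟩ :=
    argmin_step (isCompact_K x) hne (fun w => val l u w f) (continuous_val f)
  obtain ⟨K2, hK2sub, hK2c, hK2ne, hK2min, hK2cl⟩ :=
    argmin_step hK1c hK1ne (fun w => val l u w phi1) (continuous_val phi1)
  obtain ⟨K3, hK3sub, _, hK3ne, hK3min, _⟩ :=
    argmin_step hK2c hK2ne (fun w => -val l u w phi2) (continuous_val phi2).neg
  obtain ⟨μ, hμ3⟩ := hK3ne
  have hμ2 : μ ∈ K2 := hK3sub hμ3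
  have hμ1 : μ ∈ K1 := hK2sub hμ2
  have hμK : μ ∈ K l u x := hK1sub hμ1
  refine ⟨μ, hμK, fun w hw => hK1min μ hμ1 w hw, ?_⟩
  have build : ∀ (y z : BT l u), μ y ≠ 0 → μ z ≠ 0 → y ≠ z → ∀ α : ℤ, 0 ≤ α →
      ∃ w' ∈ K1, ∀ φ : (Fin n → ℤ) → ℝ,
        val l u w' φ = val l u μ φ
          + min (μ y) (μ z) * (φ (exA y.1 z.1 α) + φ (exB y.1 z.1 α) - φ y.1 - φ z.1) := by
    intro y z hy hz hyz α hα
    have hyB := mem_box_iff.1 y.2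
    have hzB := mem_box_iff.1 z.2
    set a : BT l u := ⟨exA y.1 z.1 α, mem_box_iff.2 (exA_inBox hyB hzB hα)⟩ with ha
    set b : BT l u := ⟨exB y.1 z.1 α, mem_box_iff.2 (exB_inBox hyB hzB hα)⟩ with hb
    set δ : ℝ := min (μ y) (μ z) with hδ
    have hδ0 : 0 ≤ δ := le_min (hμK.1 y) (hμK.1 z)
    have hmem : exch μ y z a b δ ∈ K l u x :=
      exch_mem_K hμK y z a b hyz hδ0 (min_le_left _ _) (min_le_right _ _)
        (fun i => exAB_add _ _ _ _)
    have hLnat : f (exA y.1 z.1 α) + f (exB y.1 z.1 α) ≤ f y.1 + f z.1 :=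
      hf y.1 z.1 hyB hzB α hα (exA_inBox hyB hzB hα) (exB_inBox hyB hzB hα)
    have hval : val l u (exch μ y z a b δ) f ≤ val l u μ f := by
      rw [val_exch]
      have h1 : f a.1 + f b.1 - f y.1 - f z.1 ≤ 0 := by
        simp only [ha, hb]
        linarith
      nlinarith
    exact ⟨exch μ y z a b δ, hK1cl μ hμ1 _ hmem hval, fun φ => val_exch μ y z a b δ φ⟩
  -- no pair with a gap of ≥ 2 in some coordinate
  have nogap : ∀ (y z : BT l u), μ y ≠ 0 → μ z ≠ 0 → ∀ i, y.1 i ≤ z.1 i + 1 := by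
    intro y z hy hz i
    by_contra hcon
    push_neg at hcon
    have hgap : z.1 i + 2 ≤ y.1 i := by omega
    have hyz : y ≠ z := by
      intro h
      rw [h] at hgap
      omega
    obtain ⟨w', hw'1, hw'val⟩ := build y z hy hz hyz 1 zero_le_one
    have hδpos : 0 < min (μ y) (μ z) :=
      lt_min ((hμK.1 y).lt_of_ne (Ne.symm hy)) ((hμK.1 z).lt_of_ne (Ne.symm hz))
    have hlt : val l u w' phi1 < val l u μ phi1 := by
      rw [hw'val phi1]
      have := p1_lt y.1 z.1 hgap
      nlinarith
    have := hK2min μ hμ2 w' hw'1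
    linarith
  -- no mixed-sign pair
  have nomix : ∀ (y z : BT l u), μ y ≠ 0 → μ z ≠ 0 → ∀ i j,
      z.1 i < y.1 i → y.1 j < z.1 j → False := by
    intro y z hy hz i j hi hj
    have hyz : y ≠ z := by
      intro h
      rw [h] at hi
      omega
    obtain ⟨w', hw'1, hw'val⟩ := build y z hy hz hyz 0 le_rfl
    have hδpos : 0 < min (μ y) (μ z) :=
      lt_min ((hμK.1 y).lt_of_ne (Ne.symm hy)) ((hμK.1 z).lt_of_ne (Ne.symm hz))
    have heq1 : val l u w' phi1 = val l u μ phi1 := by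
      rw [hw'val phi1]
      have := p1_eq_zero y.1 z.1
      have hz0 : phi1 (exA y.1 z.1 0) + phi1 (exB y.1 z.1 0) - phi1 y.1 - phi1 z.1 = 0 := by
        linarith
      rw [hz0, mul_zero, add_zero]
    have hw'2 : w' ∈ K2 := hK2cl μ hμ2 w' hw'1 (le_of_eq heq1)
    have hgt : val l u μ phi2 < val l u w' phi2 := by
      rw [hw'val phi2]
      have := p2_lt y.1 z.1 hi hj
      nlinarith
    have := hK3min μ hμ3 w' hw'2
    linarith
  intro v w hv hw
  constructor
  · by_contra hc
    push_neg at hc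
    obtain ⟨h1, h2⟩ := hc
    rw [Pi.le_def] at h1 h2
    push_neg at h1 h2
    obtain ⟨j, hj⟩ := h1
    obtain ⟨i, hi⟩ := h2
    exact nomix v w hv hw j i hj hi
  · intro i
    have g1 := nogap v w hv hw i
    have g2 := nogap w v hw hv i
    rw [abs_le]
    omega

lemma suppF_nonempty {x : Fin n → ℝ} {μ : BT l u → ℝ} (hμ : μ ∈ K l u x) : ∃ v, μ v ≠ 0 := by
  by_contra h
  push_neg at h
  have h1 := hμ.2.1
  rw [Finset.sum_eq_zero (fun v _ => h v)] at h1
  norm_num at h1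

lemma stepA1 {x : Fin n → ℝ} {μ : BT l u → ℝ} (hμ : μ ∈ K l u x) (hμP : PW μ)
    (v : BT l u) (hv : μ v ≠ 0) (i : Fin n) :
    v.1 i = ⌊x i⌋ ∨ (v.1 i = ⌊x i⌋ + 1 ∧ ((⌊x i⌋ : ℝ) ≠ x i)) := by
  obtain ⟨v0, hv0⟩ := suppF_nonempty hμ
  obtain ⟨vm, hvmm, hvmmin⟩ := Finset.exists_min_image
    (Finset.univ.filter fun w : BT l u => μ w ≠ 0) (fun w => w.1 i) ⟨v0, by simp [hv0]⟩
  rw [Finset.mem_filter] at hvmm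
  set m := vm.1 i with hm
  have hrange : ∀ w : BT l u, μ w ≠ 0 → m ≤ w.1 i ∧ w.1 i ≤ m + 1 := by
    intro w hw
    refine ⟨hvmmin w (by simp [hw]), ?_⟩
    have habs := (hμP w vm hw hvmm.2).2 i
    rw [abs_le] at habs
    omega
  have hmom : (∑ w : BT l u, μ w * ((w.1 i : ℝ))) = x i := hμ.2.2 i
  have hsum1 : (∑ w : BT l u, μ w) = 1 := hμ.2.1
  have hnn := hμ.1
  have hd : (∑ w : BT l u, μ w * ((w.1 i : ℝ) - m)) = x i - m := by
    simp only [mul_sub]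
    rw [Finset.sum_sub_distrib, hmom, ← Finset.sum_mul, hsum1]
    ring
  have hterm0 : ∀ w : BT l u, 0 ≤ μ w * ((w.1 i : ℝ) - m) := by
    intro w
    rcases eq_or_ne (μ w) 0 with h | h
    · simp [h]
    · have h1 : (m : ℝ) ≤ (w.1 i : ℝ) := by exact_mod_cast (hrange w h).1
      have h2 := hnn w
      nlinarith
  have hterm1 : ∀ w : BT l u, μ w * ((w.1 i : ℝ) - m) ≤ μ w := by
    intro w
    rcases eq_or_ne (μ w) 0 with h | h
    · simp [h]
    · have h1 : (w.1 i : ℝ) ≤ (m : ℝ) + 1 := by exact_mod_cast (hrange w h).2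
      have h2 := hnn w
      nlinarith
  have hlow : (m : ℝ) ≤ x i := by
    have := Finset.sum_nonneg (s := (Finset.univ : Finset (BT l u))) (fun w _ => hterm0 w)
    rw [hd] at this
    linarith
  have hup : x i ≤ (m : ℝ) + 1 := by
    have := Finset.sum_le_sum (fun (w : BT l u) (_ : w ∈ Finset.univ) => hterm1 w)
    rw [hd, hsum1] at this
    linarith
  rcases eq_or_lt_of_le hlow with heq | hlt
  · -- x i = m
    have hz : (∑ w : BT l u, μ w * ((w.1 i : ℝ) - m)) = 0 := by rw [hd, ← heq]; ring
    have hall := (Finset.sum_eq_zero_iff_of_nonneg (fun w _ => hterm0 w)).1 hz v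
      (Finset.mem_univ v)
    have hvi : (v.1 i : ℝ) = m := by
      rcases mul_eq_zero.1 hall with h | h
      · exact absurd h hv
      · linarith
    have hfl : ⌊x i⌋ = m := by rw [← heq, Int.floor_intCast]
    left
    rw [hfl]
    exact_mod_cast hvi
  · rcases eq_or_lt_of_le hup with heq2 | hlt2
    · -- x i = m + 1
      have hd2 : (∑ w : BT l u, μ w * ((m : ℝ) + 1 - (w.1 i : ℝ))) = 0 := by
        simp only [mul_sub, mul_add, mul_one]
        rw [Finset.sum_sub_distrib, Finset.sum_add_distrib, hmom, ← Finset.sum_mul, hsum1]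
        rw [heq2]
        ring
      have hterm2 : ∀ w : BT l u, 0 ≤ μ w * ((m : ℝ) + 1 - (w.1 i : ℝ)) := by
        intro w
        rcases eq_or_ne (μ w) 0 with h | h
        · simp [h]
        · have h1 : (w.1 i : ℝ) ≤ (m : ℝ) + 1 := by exact_mod_cast (hrange w h).2
          have h2 := hnn w
          nlinarith
      have hall := (Finset.sum_eq_zero_iff_of_nonneg (fun w _ => hterm2 w)).1 hd2 v
        (Finset.mem_univ v)
      have hvi : (v.1 i : ℝ) = (m : ℝ) + 1 := by
        rcases mul_eq_zero.1 hall with h | h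
        · exact absurd h hv
        · linarith
      have hfl : ⌊x i⌋ = m + 1 := by
        rw [heq2]
        exact_mod_cast Int.floor_intCast (m + 1)
      left
      rw [hfl]
      exact_mod_cast hvi
    · -- m < x i < m + 1
      have hfl : ⌊x i⌋ = m := by
        rw [Int.floor_eq_iff]
        constructor
        · linarith
        · push_cast
          linarith
      have hne : ((⌊x i⌋ : ℤ) : ℝ) ≠ x i := by
        rw [hfl]
        exact ne_of_lt hlt
      rcases hrange v hv with ⟨h1, h2⟩
      have hcase : v.1 i = m ∨ v.1 i = m + 1 := by omega
      rcases hcase with h | h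
      · left; omega
      · right
        exact ⟨by omega, hne⟩

lemma stepA2 {x : Fin n → ℝ} {μ : BT l u → ℝ} (hμ : μ ∈ K l u x) (hμP : PW μ) (i : Fin n) :
    (∑ v ∈ Finset.univ.filter (fun v : BT l u => v.1 i = ⌊x i⌋ + 1), μ v)
      = x i - (⌊x i⌋ : ℝ) := by
  have hmom : (∑ w : BT l u, μ w * ((w.1 i : ℝ))) = x i := hμ.2.2 i
  have hsum1 : (∑ w : BT l u, μ w) = 1 := hμ.2.1
  have key : ∀ v : BT l u,
      (if v.1 i = ⌊x i⌋ + 1 then μ v else 0) = μ v * ((v.1 i : ℝ) - (⌊x i⌋ : ℝ)) := by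
    intro v
    rcases eq_or_ne (μ v) 0 with h | h
    · simp [h]
    · rcases stepA1 hμ hμP v h i with h1 | ⟨h1, _⟩
      · rw [h1, if_neg (by omega)]
        push_cast
        ring
      · rw [h1, if_pos rfl]
        push_cast
        ring
  rw [Finset.sum_filter, Finset.sum_congr rfl (fun v _ => key v)]
  simp only [mul_sub]
  rw [Finset.sum_sub_distrib, hmom, ← Finset.sum_mul, hsum1]
  ring

/-- support as a finset -/
noncomputable def suppF (μ : BT l u → ℝ) : Finset (BT l u) := Finset.univ.filter (fun v => μ v ≠ 0)

/-- the set of coordinates where `v` takes the upper value -/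
noncomputable def SV (x : Fin n → ℝ) (v : BT l u) : Finset (Fin n) :=
  Finset.univ.filter (fun i => v.1 i = ⌊x i⌋ + 1)

/-- set of fractional coordinates -/
noncomputable def NN (x : Fin n → ℝ) : Finset (Fin n) :=
  Finset.univ.filter (fun i => ((⌊x i⌋ : ℝ) ≠ x i))

noncomputable def FF (μ : BT l u → ℝ) (x : Fin n → ℝ) (S : Finset (Fin n)) : ℝ :=
  ∑ v ∈ (suppF μ).filter (fun v => ∀ i ∈ S, v.1 i = ⌊x i⌋ + 1), μ v

noncomputable def GG (μ : BT l u → ℝ) (x : Fin n → ℝ) (S : Finset (Fin n)) : ℝ :=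
  ∑ v ∈ (suppF μ).filter (fun v => SV x v = S), μ v

lemma SV_subset_NN {x : Fin n → ℝ} {μ : BT l u → ℝ} (hμ : μ ∈ K l u x) (hμP : PW μ)
    (v : BT l u) (hv : μ v ≠ 0) : SV x v ⊆ NN x := by
  intro i hi
  rw [SV, Finset.mem_filter] at hi
  rcases stepA1 hμ hμP v hv i with h1 | ⟨_, h2⟩
  · omega
  · rw [NN, Finset.mem_filter]
    exact ⟨Finset.mem_univ i, h2⟩

lemma pattern {x : Fin n → ℝ} {μ : BT l u → ℝ} (hμ : μ ∈ K l u x) (hμP : PW μ)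
    (v : BT l u) (hv : μ v ≠ 0) (i : Fin n) :
    v.1 i = if i ∈ SV x v then ⌊x i⌋ + 1 else ⌊x i⌋ := by
  by_cases hi : i ∈ SV x v
  · rw [if_pos hi]
    exact (Finset.mem_filter.1 hi).2
  · rw [if_neg hi]
    rcases stepA1 hμ hμP v hv i with h1 | ⟨h1, _⟩
    · exact h1
    · exact absurd (Finset.mem_filter.2 ⟨Finset.mem_univ i, h1⟩) hi

lemma FF_empty {x : Fin n → ℝ} {μ : BT l u → ℝ} (hμ : μ ∈ K l u x) :
    FF μ x ∅ = 1 := by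
  rw [FF]
  have h1 : (suppF μ).filter (fun v => ∀ i ∈ (∅ : Finset (Fin n)), v.1 i = ⌊x i⌋ + 1)
      = suppF μ := by
    apply Finset.filter_true_of_mem
    intro v _ i hi
    exact absurd hi (Finset.notMem_empty i)
  rw [h1, suppF, Finset.sum_filter_ne_zero]
  exact hμ.2.1

lemma sum_U {x : Fin n → ℝ} {μ : BT l u → ℝ} (hμ : μ ∈ K l u x) (hμP : PW μ) (i : Fin n) :
    (∑ v ∈ (suppF μ).filter (fun v => v.1 i = ⌊x i⌋ + 1), μ v) = x i - (⌊x i⌋ : ℝ) := by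
  rw [← stepA2 hμ hμP i]
  rw [suppF, Finset.filter_filter]
  rw [show (Finset.univ.filter (fun v : BT l u => μ v ≠ 0 ∧ v.1 i = ⌊x i⌋ + 1))
      = (Finset.univ.filter (fun v : BT l u => v.1 i = ⌊x i⌋ + 1)).filter (fun v => μ v ≠ 0)
    from by rw [Finset.filter_filter]; congr 1; ext v; tauto]
  exact Finset.sum_filter_ne_zero _

lemma FF_min {x : Fin n → ℝ} {μ : BT l u → ℝ} (hμ : μ ∈ K l u x) (hμP : PW μ)
    {S : Finset (Fin n)} (hS : S.Nonempty) (hSN : S ⊆ NN x) :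
    FF μ x S = (S.image (fun i => x i - (⌊x i⌋ : ℝ))).min' (hS.image _) := by
  classical
  set U : Fin n → Finset (BT l u) :=
    fun i => (suppF μ).filter (fun v => v.1 i = ⌊x i⌋ + 1) with hU
  have hchain : ∀ i ∈ S, ∀ j ∈ S, U i ⊆ U j ∨ U j ⊆ U i := by
    intro i _ j _
    by_contra hc
    push_neg at hc
    obtain ⟨h1, h2⟩ := hc
    obtain ⟨v, hvUi, hvnUj⟩ := Finset.not_subset.1 h1
    obtain ⟨w, hwUj, hwnUi⟩ := Finset.not_subset.1 h2
    rw [hU, Finset.mem_filter, suppF, Finset.mem_filter] at hvUi hvnUj hwUj hwnUi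
    push_neg at hvnUj hwnUi
    have hv : μ v ≠ 0 := hvUi.1.2
    have hw : μ w ≠ 0 := hwUj.1.2
    have hvj : v.1 j ≠ ⌊x j⌋ + 1 := hvnUj ⟨Finset.mem_univ v, hv⟩
    have hwi : w.1 i ≠ ⌊x i⌋ + 1 := hwnUi ⟨Finset.mem_univ w, hw⟩
    rcases (hμP v w hv hw).1 with hle | hle
    · -- v ≤ w, but v i = fl+1 so w i ≥ fl + 1, and A1 forces w i = fl + 1
      have hlei : v.1 i ≤ w.1 i := hle i
      have hv2 : v.1 i = ⌊x i⌋ + 1 := hvUi.2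
      rcases stepA1 hμ hμP w hw i with hA | ⟨hA, _⟩
      · omega
      · exact hwi hA
    · have hlej : w.1 j ≤ v.1 j := hle j
      have hw2 : w.1 j = ⌊x j⌋ + 1 := hwUj.2
      rcases stepA1 hμ hμP v hv j with hA | ⟨hA, _⟩
      · omega
      · exact hvj hA
  obtain ⟨i0, hi0S, hi0min⟩ := Finset.exists_min_image S (fun i => (U i).card) hS
  have hU0 : ∀ i ∈ S, U i0 ⊆ U i := by
    intro i hi
    rcases hchain i0 hi0S i hi with h | h
    · exact h
    · rw [Finset.eq_of_subset_of_card_le h (hi0min i hi)]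
  have hfe : (suppF μ).filter (fun v => ∀ i ∈ S, v.1 i = ⌊x i⌋ + 1) = U i0 := by
    ext v
    rw [Finset.mem_filter, hU, Finset.mem_filter]
    constructor
    · rintro ⟨h1, h2⟩
      exact ⟨h1, h2 i0 hi0S⟩
    · rintro ⟨h1, h2⟩
      refine ⟨h1, fun i hi => ?_⟩
      have : v ∈ U i := hU0 i hi (by rw [hU, Finset.mem_filter]; exact ⟨h1, h2⟩)
      rw [hU, Finset.mem_filter] at this
      exact this.2
  rw [FF, hfe]
  have hval : ∀ i ∈ S, (∑ v ∈ U i, μ v) = x i - (⌊x i⌋ : ℝ) := fun i _ => sum_U hμ hμP i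
  rw [hval i0 hi0S]
  apply le_antisymm
  · -- x i0 − fl i0 ≤ min'
    apply Finset.le_min'
    intro y hy
    obtain ⟨j, hjS, hjy⟩ := Finset.mem_image.1 hy
    rw [← hjy, ← hval j hjS, ← hval i0 hi0S]
    exact Finset.sum_le_sum_of_subset_of_nonneg (hU0 j hjS) (fun v _ _ => hμ.1 v)
  · exact Finset.min'_le _ _ (Finset.mem_image_of_mem _ hi0S)

lemma FF_part {x : Fin n → ℝ} {μ : BT l u → ℝ} (hμ : μ ∈ K l u x) (hμP : PW μ)
    {S : Finset (Fin n)} (hS : S ⊆ NN x) :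
    FF μ x S = ∑ T ∈ (NN x).powerset.filter (fun T => S ⊆ T), GG μ x T := by
  classical
  set A := (suppF μ).filter (fun v => ∀ i ∈ S, v.1 i = ⌊x i⌋ + 1) with hA
  set B := (NN x).powerset.filter (fun T => S ⊆ T) with hB
  have hmaps : ∀ v ∈ A, SV x v ∈ B := by
    intro v hv
    rw [hA, Finset.mem_filter] at hv
    have hsupp : μ v ≠ 0 := (Finset.mem_filter.1 hv.1).2
    rw [hB, Finset.mem_filter, Finset.mem_powerset]
    refine ⟨SV_subset_NN hμ hμP v hsupp, fun i hi => ?_⟩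
    rw [SV, Finset.mem_filter]
    exact ⟨Finset.mem_univ i, hv.2 i hi⟩
  have hfib := Finset.sum_fiberwise_of_maps_to hmaps μ
  rw [FF, ← hA, ← hfib]
  apply Finset.sum_congr rfl
  intro T hT
  rw [GG]
  congr 1
  ext v
  rw [Finset.mem_filter, hA, Finset.mem_filter, Finset.mem_filter]
  constructor
  · rintro ⟨⟨h1, _⟩, h2⟩
    exact ⟨h1, h2⟩
  · rintro ⟨h1, h2⟩
    refine ⟨⟨h1, fun i hi => ?_⟩, h2⟩
    rw [hB, Finset.mem_filter] at hT
    have : i ∈ SV x v := by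
      rw [h2]
      exact hT.2 hi
    rw [SV, Finset.mem_filter] at this
    exact this.2

lemma GG_rec {x : Fin n → ℝ} {μ : BT l u → ℝ} (hμ : μ ∈ K l u x) (hμP : PW μ)
    {S : Finset (Fin n)} (hS : S ⊆ NN x) :
    GG μ x S = FF μ x S
      - ∑ T ∈ ((NN x).powerset.filter (fun T => S ⊆ T)).erase S, GG μ x T := by
  have hSB : S ∈ (NN x).powerset.filter (fun T => S ⊆ T) :=
    Finset.mem_filter.2 ⟨Finset.mem_powerset.2 hS, Finset.Subset.refl S⟩
  have := Finset.add_sum_erase _ (GG μ x) hSB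
  rw [FF_part hμ hμP hS]
  linarith

lemma FF_eq {x : Fin n → ℝ} {μ ν : BT l u → ℝ} (hμ : μ ∈ K l u x) (hμP : PW μ)
    (hν : ν ∈ K l u x) (hνP : PW ν) {S : Finset (Fin n)} (hS : S ⊆ NN x) :
    FF μ x S = FF ν x S := by
  rcases S.eq_empty_or_nonempty with h | h
  · rw [h, FF_empty hμ, FF_empty hν]
  · rw [FF_min hμ hμP h hS, FF_min hν hνP h hS]

lemma GG_eq {x : Fin n → ℝ} {μ ν : BT l u → ℝ} (hμ : μ ∈ K l u x) (hμP : PW μ)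
    (hν : ν ∈ K l u x) (hνP : PW ν) :
    ∀ d : ℕ, ∀ S ⊆ NN x, (NN x).card - S.card ≤ d → GG μ x S = GG ν x S := by
  intro d
  induction d with
  | zero =>
    intro S hS hd
    have hcard : (NN x).card ≤ S.card := by omega
    have hSN : S = NN x := Finset.eq_of_subset_of_card_le hS hcard
    have hz : ∀ (ρ : BT l u → ℝ),
        (∑ T ∈ ((NN x).powerset.filter (fun T => S ⊆ T)).erase S, GG ρ x T) = 0 := by
      intro ρ
      apply Finset.sum_eq_zero
      intro T hT
      rw [Finset.mem_erase, Finset.mem_filter, Finset.mem_powerset] at hT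
      rw [← hSN] at hT
      exact absurd (Finset.Subset.antisymm hT.2.1 hT.2.2) hT.1
    rw [GG_rec hμ hμP hS, GG_rec hν hνP hS, hz μ, hz ν, FF_eq hμ hμP hν hνP hS]
  | succ d ih =>
    intro S hS hd
    rw [GG_rec hμ hμP hS, GG_rec hν hνP hS, FF_eq hμ hμP hν hνP hS]
    congr 1
    apply Finset.sum_congr rfl
    intro T hT
    rw [Finset.mem_erase, Finset.mem_filter, Finset.mem_powerset] at hT
    have hsub : T ⊆ NN x := hT.2.1
    have hlt : S.card < T.card := Finset.card_lt_card (lt_of_le_of_ne hT.2.2 (Ne.symm hT.1))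
    have hle : T.card ≤ (NN x).card := Finset.card_le_card hsub
    exact ih T hsub (by omega)

lemma supp_val_eq {x : Fin n → ℝ} {μ ν : BT l u → ℝ} (hμ : μ ∈ K l u x) (hμP : PW μ)
    (hν : ν ∈ K l u x) (hνP : PW ν) (v : BT l u) (hv : μ v ≠ 0) : μ v = ν v := by
  classical
  set S := SV x v with hSdef
  have hS : S ⊆ NN x := SV_subset_NN hμ hμP v hv
  have hGμ : GG μ x S = μ v := by
    rw [GG]
    have hfe : (suppF μ).filter (fun w => SV x w = S) = {v} := by
      ext w
      rw [Finset.mem_filter, Finset.mem_singleton, suppF, Finset.mem_filter]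
      constructor
      · rintro ⟨⟨_, hw⟩, hws⟩
        apply Subtype.ext
        funext i
        rw [pattern hμ hμP w hw i, pattern hμ hμP v hv i, hws]
      · intro hwv
        subst hwv
        exact ⟨⟨Finset.mem_univ _, hv⟩, hSdef.symm⟩
    rw [hfe, Finset.sum_singleton]
  have hGν : GG μ x S = GG ν x S :=
    GG_eq hμ hμP hν hνP (NN x).card S hS (by omega)
  have hsub : (suppF ν).filter (fun w => SV x w = S) ⊆ {v} := by
    intro w hw
    rw [Finset.mem_filter, suppF, Finset.mem_filter] at hw
    rw [Finset.mem_singleton]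
    apply Subtype.ext
    funext i
    rw [pattern hν hνP w hw.1.2 i, pattern hμ hμP v hv i, hw.2]
  rcases eq_or_ne (ν v) 0 with h0 | h0
  · exfalso
    have hempty : (suppF ν).filter (fun w => SV x w = S) = ∅ := by
      apply Finset.eq_empty_of_forall_notMem
      intro w hw
      have hwv := hsub hw
      rw [Finset.mem_singleton] at hwv
      subst hwv
      rw [Finset.mem_filter, suppF, Finset.mem_filter] at hw
      exact hw.1.2 h0
    have : GG ν x S = 0 := by rw [GG, hempty, Finset.sum_empty]
    rw [hGμ, this] at hGν
    exact hv hGν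
  · have hfe : (suppF ν).filter (fun w => SV x w = S) = {v} := by
      apply Finset.Subset.antisymm hsub
      intro w hw
      rw [Finset.mem_singleton] at hw
      subst hw
      rw [Finset.mem_filter, suppF, Finset.mem_filter]
      exact ⟨⟨Finset.mem_univ w, h0⟩, hSdef.symm⟩
    have : GG ν x S = ν v := by rw [GG, hfe, Finset.sum_singleton]
    rw [hGμ, this] at hGν
    exact hGν

lemma PW_unique {x : Fin n → ℝ} {μ ν : BT l u → ℝ} (hμ : μ ∈ K l u x) (hμP : PW μ)
    (hν : ν ∈ K l u x) (hνP : PW ν) : μ = ν := by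
  funext v
  rcases eq_or_ne (μ v) 0 with h1 | h1
  · rcases eq_or_ne (ν v) 0 with h2 | h2
    · rw [h1, h2]
    · exact (supp_val_eq hν hνP hμ hμP v h2).symm
  · exact supp_val_eq hμ hμP hν hνP v h1

lemma exists_best (x : Fin n → ℝ) (hne : (K l u x).Nonempty) :
    ∃ μ ∈ K l u x, ∀ f : (Fin n → ℤ) → ℝ, IsLNatOn l u f →
      ∀ w ∈ K l u x, val l u μ f ≤ val l u w f := by
  have hzero : IsLNatOn l u (fun _ => (0:ℝ)) := by
    intro a b ha hb α hα h1 h2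
    norm_num
  obtain ⟨μ, hμK, _, hμP⟩ := exists_good x hne hzero
  refine ⟨μ, hμK, fun f hf w hw => ?_⟩
  obtain ⟨μf, hμfK, hμfmin, hμfP⟩ := exists_good x hne hf
  have : μ = μf := PW_unique hμK hμP hμfK hμfP
  rw [this]
  exact hμfmin w hw

lemma extract (hlu : ∀ i, l i ≤ u i) {x : Fin n → ℝ} {t : ℝ} {f : (Fin n → ℤ) → ℝ}
    (hmem : ((x, t) : (Fin n → ℝ) × ℝ) ∈ convexHull ℝ (epiSet l u f)) :
    ∃ w ∈ K l u x, val l u w f ≤ t := by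
  classical
  rw [convexHull_eq] at hmem
  obtain ⟨ι, s, μw, z, h0, h1, hz, hcm⟩ := hmem
  have hlmem : l ∈ box l u := mem_box_iff.2 (fun i => ⟨le_refl _, hlu i⟩)
  set Y : ι → BT l u := fun s' =>
    if h : z s' ∈ epiSet l u f then
      ⟨Classical.choose h, mem_box_iff.2 (Classical.choose_spec h).1⟩
    else ⟨l, hlmem⟩ with hYdef
  have hY : ∀ s' ∈ s, ((z s').1 = fun i => (((Y s').1 i : ℝ))) ∧ f (Y s').1 ≤ (z s').2 := by
    intro s' hs'
    have h := hz s' hs'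
    rw [hYdef]
    simp only [dif_pos h]
    exact ⟨(Classical.choose_spec h).2.1, (Classical.choose_spec h).2.2⟩
  have hsum : (∑ s' ∈ s, μw s' • z s') = ((x, t) : (Fin n → ℝ) × ℝ) := by
    rw [← Finset.centerMass_eq_of_sum_1 s z h1]
    exact hcm
  set w : BT l u → ℝ := fun v => ∑ s' ∈ s.filter (fun s' => Y s' = v), μw s' with hwdef
  have hval : ∀ φ : (Fin n → ℤ) → ℝ, val l u w φ = ∑ s' ∈ s, μw s' * φ (Y s').1 := by
    intro φ
    rw [val]
    have hmaps : ∀ s' ∈ s, Y s' ∈ (Finset.univ : Finset (BT l u)) := fun s' _ =>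
      Finset.mem_univ _
    rw [← Finset.sum_fiberwise_of_maps_to hmaps (fun s' => μw s' * φ (Y s').1)]
    apply Finset.sum_congr rfl
    intro v _
    rw [hwdef, Finset.sum_mul]
    apply Finset.sum_congr rfl
    intro s' hs'
    rw [Finset.mem_filter] at hs'
    rw [hs'.2]
  have hwK : w ∈ K l u x := by
    refine ⟨?_, ?_, ?_⟩
    · intro v
      rw [hwdef]
      exact Finset.sum_nonneg fun s' hs' => h0 s' (Finset.mem_filter.1 hs').1
    · have hmaps : ∀ s' ∈ s, Y s' ∈ (Finset.univ : Finset (BT l u)) := fun s' _ =>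
        Finset.mem_univ _
      rw [show (∑ v, w v) = ∑ v : BT l u, ∑ s' ∈ s.filter (fun s' => Y s' = v), μw s' from rfl]
      rw [Finset.sum_fiberwise_of_maps_to hmaps μw]
      exact h1
    · intro i
      rw [hval]
      have hxi : (∑ s' ∈ s, μw s' * (z s').1 i) = x i := by
        have hfst := congrArg Prod.fst hsum
        rw [Prod.fst_sum] at hfst
        have := congrFun hfst i
        rw [Finset.sum_apply] at this
        simpa using this
      rw [← hxi]
      apply Finset.sum_congr rfl
      intro s' hs'
      rw [(hY s' hs').1]
  refine ⟨w, hwK, ?_⟩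
  rw [hval]
  have hsnd := congrArg Prod.snd hsum
  rw [Prod.snd_sum] at hsnd
  simp only [Prod.smul_snd, smul_eq_mul] at hsnd
  rw [← hsnd]
  apply Finset.sum_le_sum
  intro s' hs'
  exact mul_le_mul_of_nonneg_left (hY s' hs').2 (h0 s' hs')

end S12

open S12 in
/-- For pairs of L♮-convex functions `fᵢ, gᵢ` on a common box `𝒳`
whose differences `gᵢ − fᵢ` agree with a common function `h` on `𝒳`, the convex
hull of the linked joint epigraph `Q′` equals the intersection of the trivial
bounds, the individual epigraph convex hulls, and the linking equalities. -/
theorem stmt_12 (n k : ℕ) (hk : 1 ≤ k) (l u : Fin n → ℤ) (hlu : ∀ i, l i ≤ u i)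
    (f g : Fin k → (Fin n → ℤ) → ℝ)
    (hf : ∀ i, IsLNatOn l u (f i)) (hg : ∀ i, IsLNatOn l u (g i))
    (h : (Fin n → ℤ) → ℝ)
    (hh : ∀ x : Fin n → ℤ, inBox l u x → ∀ i, h x = g i x - f i x) :
    convexHull ℝ
        {q : (Fin k → ℝ) × (Fin k → ℝ) × (Fin n → ℝ) | ∃ x : Fin n → ℤ,
          inBox l u x ∧ q.2.2 = (fun i => (x i : ℝ)) ∧
          (∀ i, g i x ≤ q.1 i) ∧ (∀ i, f i x ≤ q.2.1 i) ∧
          ∀ i i' : Fin k, q.1 i - q.2.1 i = q.1 i' - q.2.1 i'}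
      = {q : (Fin k → ℝ) × (Fin k → ℝ) × (Fin n → ℝ) |
          (∀ i, (l i : ℝ) ≤ q.2.2 i ∧ q.2.2 i ≤ (u i : ℝ)) ∧
          (∀ i : Fin k, (q.2.2, q.1 i) ∈ convexHull ℝ (epiSet l u (g i)) ∧
            (q.2.2, q.2.1 i) ∈ convexHull ℝ (epiSet l u (f i))) ∧
          ∀ i i' : Fin k, q.1 i - q.2.1 i = q.1 i' - q.2.1 i'} := by
  apply Set.Subset.antisymm
  · -- convex hull of Q' is contained in the outer description
    apply convexHull_min
    · rintro q ⟨x0, hx0, hq22, hgle, hfle, hlink⟩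
      refine ⟨?_, ?_, hlink⟩
      · intro i
        have : q.2.2 i = (x0 i : ℝ) := congrFun hq22 i
        rw [this]
        exact ⟨by exact_mod_cast (hx0 i).1, by exact_mod_cast (hx0 i).2⟩
      · intro i
        constructor
        · exact subset_convexHull ℝ _ ⟨x0, hx0, hq22, hgle i⟩
        · exact subset_convexHull ℝ _ ⟨x0, hx0, hq22, hfle i⟩
    · -- the outer description is convex
      intro p hp q hq a b ha hb hab
      obtain ⟨hp1, hp2, hp3⟩ := hp
      obtain ⟨hq1, hq2, hq3⟩ := hq
      refine ⟨?_, ?_, ?_⟩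
      · intro i
        have e : (a • p + b • q).2.2 i = a * p.2.2 i + b * q.2.2 i := by
          simp [Prod.snd_add, Prod.smul_snd, Pi.add_apply, Pi.smul_apply, smul_eq_mul]
        rw [e]
        have h1 := mul_le_mul_of_nonneg_left (hp1 i).1 ha
        have h2 := mul_le_mul_of_nonneg_left (hq1 i).1 hb
        have h3 := mul_le_mul_of_nonneg_left (hp1 i).2 ha
        have h4 := mul_le_mul_of_nonneg_left (hq1 i).2 hb
        have hl : ((l i : ℝ)) = a * (l i : ℝ) + b * (l i : ℝ) := by
          rw [← add_mul, hab, one_mul]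
        have hu : ((u i : ℝ)) = a * (u i : ℝ) + b * (u i : ℝ) := by
          rw [← add_mul, hab, one_mul]
        constructor
        · rw [hl]; linarith
        · rw [hu]; linarith
      · intro i
        have e1 : ((a • p + b • q).2.2, (a • p + b • q).1 i)
            = a • ((p.2.2, p.1 i) : (Fin n → ℝ) × ℝ) + b • ((q.2.2, q.1 i)) := by
          apply Prod.ext <;>
            simp [Prod.snd_add, Prod.fst_add, Prod.smul_snd, Prod.smul_fst]
        have e2 : ((a • p + b • q).2.2, (a • p + b • q).2.1 i)
            = a • ((p.2.2, p.2.1 i) : (Fin n → ℝ) × ℝ) + b • ((q.2.2, q.2.1 i)) := by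
          apply Prod.ext <;>
            simp [Prod.snd_add, Prod.fst_add, Prod.smul_snd, Prod.smul_fst]
        constructor
        · rw [e1]
          exact (convex_convexHull ℝ _) (hp2 i).1 (hq2 i).1 ha hb hab
        · rw [e2]
          exact (convex_convexHull ℝ _) (hp2 i).2 (hq2 i).2 ha hb hab
      · intro i i'
        have e : ∀ j, (a • p + b • q).1 j - (a • p + b • q).2.1 j
            = a * (p.1 j - p.2.1 j) + b * (q.1 j - q.2.1 j) := by
          intro j
          simp [Prod.snd_add, Prod.fst_add, Prod.smul_snd, Prod.smul_fst, Pi.add_apply,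
            Pi.smul_apply, smul_eq_mul]
          ring
        rw [e i, e i', hp3 i i', hq3 i i']
  · -- the outer description is contained in the convex hull
    rintro q ⟨hbound, hhull, hlink⟩
    have i0 : Fin k := ⟨0, hk⟩
    obtain ⟨w0, hw0K, _⟩ := extract hlu (hhull i0).1
    have hne : (K l u q.2.2).Nonempty := ⟨w0, hw0K⟩
    obtain ⟨μ, hμK, hbest⟩ := exists_best q.2.2 hne
    have hsum1 : (∑ v, μ v) = 1 := hμK.2.1
    have hgval : ∀ i, val l u μ (g i) ≤ q.1 i := by
      intro i
      obtain ⟨w', hw'K, hw'v⟩ := extract hlu (hhull i).1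
      exact (hbest (g i) (hg i) w' hw'K).trans hw'v
    have hfval : ∀ i, val l u μ (f i) ≤ q.2.1 i := by
      intro i
      obtain ⟨w', hw'K, hw'v⟩ := extract hlu (hhull i).2
      exact (hbest (f i) (hf i) w' hw'K).trans hw'v
    have hgf : ∀ i, val l u μ (g i) = val l u μ h + val l u μ (f i) := by
      intro i
      rw [val, val, val, ← Finset.sum_add_distrib]
      apply Finset.sum_congr rfl
      intro v _
      have hv := hh v.1 (mem_box_iff.1 v.2) i
      rw [show g i v.1 = h v.1 + f i v.1 from by linarith]
      ring
    set P : (Fin n → ℤ) → (Fin k → ℝ) × (Fin k → ℝ) × (Fin n → ℝ) := fun v =>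
      (fun i => g i v + (q.1 i - val l u μ (g i)),
       fun i => f i v + (q.2.1 i - val l u μ (f i)),
       fun j => ((v j : ℝ))) with hPdef
    have hPQ : ∀ v : BT l u, P v.1 ∈
        {q : (Fin k → ℝ) × (Fin k → ℝ) × (Fin n → ℝ) | ∃ x : Fin n → ℤ,
          inBox l u x ∧ q.2.2 = (fun i => (x i : ℝ)) ∧
          (∀ i, g i x ≤ q.1 i) ∧ (∀ i, f i x ≤ q.2.1 i) ∧
          ∀ i i' : Fin k, q.1 i - q.2.1 i = q.1 i' - q.2.1 i'} := by
      intro v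
      refine ⟨v.1, mem_box_iff.1 v.2, rfl, ?_, ?_, ?_⟩
      · intro i
        have := hgval i
        simp only [hPdef]
        linarith
      · intro i
        have := hfval i
        simp only [hPdef]
        linarith
      · intro i i'
        simp only [hPdef]
        have h1 := hgf i
        have h2 := hgf i'
        have h3 := hh v.1 (mem_box_iff.1 v.2) i
        have h4 := hh v.1 (mem_box_iff.1 v.2) i'
        have h5 := hlink i i'
        linarith
    have hmem := Finset.centerMass_mem_convexHull (Finset.univ : Finset (BT l u))
      (fun v _ => hμK.1 v) (by rw [hsum1]; norm_num) (fun v _ => hPQ v)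
    rw [Finset.centerMass_eq_of_sum_1 _ _ hsum1] at hmem
    have hq : (∑ v : BT l u, μ v • P v.1) = q := by
      have haux : ∀ (φ : (Fin n → ℤ) → ℝ) (c : ℝ),
          (∑ v : BT l u, μ v * (φ v.1 + c)) = val l u μ φ + c := by
        intro φ c
        simp only [mul_add]
        rw [Finset.sum_add_distrib, ← Finset.sum_mul, hsum1, val]
        ring
      apply Prod.ext
      · rw [Prod.fst_sum]
        funext i
        rw [Finset.sum_apply]
        simp only [Prod.smul_fst, Pi.smul_apply, smul_eq_mul, hPdef]
        rw [haux (g i) (q.1 i - val l u μ (g i))]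
        ring
      · apply Prod.ext
        · rw [Prod.snd_sum]
          have e : (q.2 : (Fin k → ℝ) × (Fin n → ℝ)).1 = q.2.1 := rfl
          rw [Prod.fst_sum]
          funext i
          rw [Finset.sum_apply]
          simp only [Prod.smul_snd, Prod.smul_fst, Pi.smul_apply, smul_eq_mul, hPdef]
          rw [haux (f i) (q.2.1 i - val l u μ (f i))]
          ring
        · rw [Prod.snd_sum, Prod.snd_sum]
          funext j
          rw [Finset.sum_apply]
          simp only [Prod.smul_snd, Pi.smul_apply, smul_eq_mul, hPdef]
          exact hμK.2.2 j
    rw [hq] at hmem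
    exact hmem
end

section
/- Let n ≥ 1 and h ∈ ℝⁿ. Define D = {(w, y) ∈ ℝ × ℝⁿ : yᵢ ≥ 0 and w ≥ hᵢ − yᵢ for all i ∈ {1,…,n}}. For each j ∈ {1,…,n}, set wʲ = h_j and yʲᵢ = max(0, hᵢ − h_j) for each i. Then (w, y) ∈ D if and only if there exist λ ∈ ℝⁿ with λ ≥ 0 and Σ_j λ_j = 1, reals μ ≥ 0 and ν ≥ 0, and s ∈ ℝⁿ with s ≥ 0, such that w = Σ_j λ_j·wʲ − μ + ν and yᵢ = Σ_j λ_j·yʲᵢ + μ + sᵢ for all i. (Equivalently, D is the Minkowski sum of the convex hull of {(wʲ, yʲ) : j ∈ {1,…,n}} and the cone generated by (−1, 1), (1, 0), and (0, eᵢ) for i ∈ {1,…,n}.) -/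
private lemma sum_ite_one {n : ℕ} (K : Fin n) (f : Fin n → ℝ) :
    ∑ j, (if j = K then (1:ℝ) else 0) * f j = f K := by
  simp [ite_mul]

private lemma sum_ite_two {n : ℕ} (a b : Fin n) (hab : a ≠ b) (x z : ℝ) (f : Fin n → ℝ) :
    ∑ j, (if j = a then x else if j = b then z else 0) * f j = x * f a + z * f b := by
  have key : ∀ j : Fin n, (if j = a then x else if j = b then z else 0) * f j
      = (if j = a then x * f j else 0) + (if j = b then z * f j else 0) := by
    intro j
    rcases eq_or_ne j a with rfl | h1
    · simp [hab]
    · rcases eq_or_ne j b with rfl | h2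
      · simp [h1]
      · simp [h1, h2]
  simp [key, Finset.sum_add_distrib]

/-- For `h ∈ ℝⁿ`, the polyhedron
`D = {(w, y) : y ≥ 0, w ≥ hᵢ − yᵢ ∀ i}` is exactly the Minkowski sum of the
convex hull of the points `(wʲ, yʲ)` (with `wʲ = h_j`, `yʲᵢ = max(0, hᵢ − h_j)`)
with the cone generated by `(−1, 1)`, `(1, 0)`, and `(0, eᵢ)`. -/
theorem stmt_13 (n : ℕ) (hn : 1 ≤ n) (h : Fin n → ℝ) (w : ℝ) (y : Fin n → ℝ) :
    ((∀ i, 0 ≤ y i) ∧ ∀ i, h i - y i ≤ w) ↔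
      ∃ lam : Fin n → ℝ, (∀ j, 0 ≤ lam j) ∧ (∑ j, lam j) = 1 ∧
      ∃ μ ν : ℝ, 0 ≤ μ ∧ 0 ≤ ν ∧
      ∃ s : Fin n → ℝ, (∀ i, 0 ≤ s i) ∧
        w = (∑ j, lam j * h j) - μ + ν ∧
        ∀ i, y i = (∑ j, lam j * max 0 (h i - h j)) + μ + s i := by
  haveI : Nonempty (Fin n) := ⟨⟨0, hn⟩⟩
  constructor
  · rintro ⟨hy, hw⟩
    -- get max and min of h
    obtain ⟨K, -, hK⟩ := Finset.exists_max_image Finset.univ h Finset.univ_nonempty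
    obtain ⟨k, -, hk⟩ := Finset.exists_min_image Finset.univ h Finset.univ_nonempty
    replace hK : ∀ j, h j ≤ h K := fun j => hK j (Finset.mem_univ j)
    replace hk : ∀ j, h k ≤ h j := fun j => hk j (Finset.mem_univ j)
    set w' : ℝ := max w (h k) with hw'
    have hww' : w ≤ w' := le_max_left _ _
    have hmu_le : ∀ i, w' - w ≤ y i := by
      intro i
      rcases le_total (h k) w with hc | hc
      · have : w' = w := max_eq_left hc
        rw [this]; simpa using hy i
      · have : w' = h k := max_eq_right hc
        have h1 := hw i
        have h2 := hk i
        rw [this]; linarith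
    by_cases hcase : h K ≤ w'
    · -- single vertex K, with ν = w' - h K, μ = w' - w
      refine ⟨fun j => if j = K then 1 else 0, ?_, ?_, w' - w, w' - h K, by linarith,
        by linarith, fun i => y i - (w' - w), ?_, ?_, ?_⟩
      · intro j; dsimp only; positivity
      · simp
      · intro i; dsimp only; linarith [hmu_le i]
      · dsimp only
        rw [sum_ite_one K h]; ring
      · intro i
        dsimp only
        rw [sum_ite_one K (fun j => max 0 (h i - h j))]
        have : max 0 (h i - h K) = 0 := max_eq_left (by linarith [hK i])
        rw [this]; ring
    · -- two-point case
      push_neg at hcase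
      have hkw' : h k ≤ w' := le_max_right _ _
      obtain ⟨a, ha_mem, ha⟩ := Finset.exists_max_image (Finset.univ.filter (fun j => h j ≤ w')) h
        ⟨k, Finset.mem_filter.mpr ⟨Finset.mem_univ k, hkw'⟩⟩
      obtain ⟨b, hb_mem, hb⟩ := Finset.exists_min_image (Finset.univ.filter (fun j => w' < h j)) h
        ⟨K, Finset.mem_filter.mpr ⟨Finset.mem_univ K, hcase⟩⟩
      simp only [Finset.mem_filter, Finset.mem_univ, true_and] at ha_mem hb_mem
      have ha' : ∀ j, h j ≤ w' → h j ≤ h a := fun j hj =>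
        ha j (Finset.mem_filter.mpr ⟨Finset.mem_univ j, hj⟩)
      have hb' : ∀ j, w' < h j → h b ≤ h j := fun j hj =>
        hb j (Finset.mem_filter.mpr ⟨Finset.mem_univ j, hj⟩)
      have hab : h a < h b := lt_of_le_of_lt ha_mem hb_mem
      have hne : a ≠ b := fun e => by rw [e] at hab; exact lt_irrefl _ hab
      have hd : (0:ℝ) < h b - h a := by linarith
      set la : ℝ := (h b - w') / (h b - h a) with hla
      set lb : ℝ := (w' - h a) / (h b - h a) with hlb
      have hla0 : 0 ≤ la := div_nonneg (by linarith) hd.le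
      have hlb0 : 0 ≤ lb := div_nonneg (by linarith) hd.le
      have hsum1 : la + lb = 1 := by rw [hla, hlb]; field_simp; ring
      have hsumh : la * h a + lb * h b = w' := by
        rw [hla, hlb]; field_simp; ring
      refine ⟨fun j => if j = a then la else if j = b then lb else 0, ?_, ?_,
        w' - w, 0, by linarith, le_refl _,
        fun i => y i - (la * max 0 (h i - h a) + lb * max 0 (h i - h b)) - (w' - w),
        ?_, ?_, ?_⟩
      · intro j; dsimp only
        split
        · exact hla0
        · split
          · exact hlb0
          · exact le_refl 0
      · have := sum_ite_two a b hne la lb (fun _ => 1)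
        simpa [hsum1] using this
      · intro i
        dsimp only
        have hmui := hmu_le i
        rcases le_or_gt (h i) w' with hi | hi
        · have h1 : h i ≤ h a := ha' i hi
          have e1 : max 0 (h i - h a) = 0 := max_eq_left (by linarith)
          have e2 : max 0 (h i - h b) = 0 := max_eq_left (by linarith)
          rw [e1, e2]
          linarith
        · have hwi := hw i
          have key : la * max 0 (h i - h a) + lb * max 0 (h i - h b) ≤ h i - w' := by
            have hib : h b ≤ h i := hb' i hi
            have e1 : max 0 (h i - h a) = h i - h a := max_eq_right (by linarith)
            have e2 : max 0 (h i - h b) = h i - h b := max_eq_right (by linarith)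
            rw [e1, e2]
            have expand : la * (h i - h a) + lb * (h i - h b)
                = (la + lb) * h i - (la * h a + lb * h b) := by ring
            rw [expand, hsum1, hsumh]; linarith
          linarith
      · dsimp only
        rw [sum_ite_two a b hne la lb h, hsumh]; ring
      · intro i
        dsimp only
        rw [sum_ite_two a b hne la lb (fun j => max 0 (h i - h j))]
        ring
  · rintro ⟨lam, hlam0, hlam1, μ, ν, hμ, hν, s, hs, hwv, hyv⟩
    constructor
    · intro i
      rw [hyv i]
      have : 0 ≤ ∑ j, lam j * max 0 (h i - h j) :=
        Finset.sum_nonneg fun j _ => mul_nonneg (hlam0 j) (le_max_left _ _)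
      linarith [hs i]
    · intro i
      have key : ∑ j, lam j * (h i - max 0 (h i - h j)) ≤ ∑ j, lam j * h j := by
        apply Finset.sum_le_sum
        intro j _
        apply mul_le_mul_of_nonneg_left _ (hlam0 j)
        have := le_max_right 0 (h i - h j)
        linarith
      have expand : ∑ j, lam j * (h i - max 0 (h i - h j))
          = (∑ j, lam j) * h i - ∑ j, lam j * max 0 (h i - h j) := by
        rw [Finset.sum_mul, ← Finset.sum_sub_distrib]
        congr 1; funext j; ring
      rw [expand, hlam1, one_mul] at key
      rw [hyv i, hwv]
      linarith [hs i]
end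

section
/- Let ℓ, u ∈ ℤⁿ with ℓ ≤ u componentwise, let 𝒳 = {x ∈ ℤⁿ : ℓ ≤ x ≤ u}, and let h¹, …, hⁿ : 𝒳 → ℝ be such that for all i, j ∈ {1,…,n}, the functions hʲ and x ↦ max(0, hⁱ(x) − hʲ(x)) are L♮-convex on 𝒳. Define the mixed-integer epigraph 𝒫 = {(w, y, x) ∈ ℝ × ℝⁿ × ℝⁿ : x ∈ 𝒳, y ≥ 0, and w ≥ hⁱ(x) − yᵢ for all i}. For u₀ ≥ 0 and v ∈ ℝⁿ with v ≥ 0 and u₀ ≤ Σᵢ vᵢ, define F_{u₀,v} : 𝒳 → ℝ by F_{u₀,v}(x) = min_{j∈{1,…,n}} [ u₀·hʲ(x) + Σᵢ vᵢ·max(0, hⁱ(x) − hʲ(x)) ]. Then the convex hull of 𝒫 in ℝ × ℝⁿ × ℝⁿ equals the set of all (w, y, x) with ℓ ≤ x ≤ u componentwise such that for every such pair (u₀, v), the point (x, u₀·w + Σᵢ vᵢ·yᵢ) lies in the convex hull of the epigraph {(x′, t) ∈ ℝⁿ × ℝ : x′ ∈ 𝒳, t ≥ F_{u₀,v}(x′)}.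 -/
namespace Stmt15Aux

variable {n : ℕ}

abbrev EE (n : ℕ) : Type := ℝ × (Fin n → ℝ) × (Fin n → ℝ)

def Sset (l u : Fin n → ℤ) (h : Fin n → (Fin n → ℤ) → ℝ) : Set (EE n) :=
  {q | ∃ x : Fin n → ℤ, inBox l u x ∧ q.2.2 = (fun i => (x i : ℝ)) ∧
    (∀ i, 0 ≤ q.2.1 i) ∧ ∀ i, h i x - q.2.1 i ≤ q.1}

def Cset (n : ℕ) : Set (EE n) :=
  {c | (∀ i, 0 ≤ c.2.1 i) ∧ (∀ i, 0 ≤ c.1 + c.2.1 i) ∧ c.2.2 = 0}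

def vtx (h : Fin n → (Fin n → ℤ) → ℝ) (x : Fin n → ℤ) (j : Fin n) : EE n :=
  (h j x, fun i => max 0 (h i x - h j x), fun i => (x i : ℝ))

def Vset (l u : Fin n → ℤ) (h : Fin n → (Fin n → ℤ) → ℝ) : Set (EE n) :=
  {p | ∃ x j, inBox l u x ∧ p = vtx h x j}

lemma inBox_iff_mem_Icc (l u x : Fin n → ℤ) :
    inBox l u x ↔ x ∈ Finset.Icc l u := by
  simp [inBox, Finset.mem_Icc, Pi.le_def, forall_and]

lemma vset_finite (l u : Fin n → ℤ) (h : Fin n → (Fin n → ℤ) → ℝ) :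
    (Vset l u h).Finite := by
  apply Set.Finite.subset (Set.Finite.image
    (f := fun xj : (Fin n → ℤ) × Fin n => vtx h xj.1 xj.2)
    (Set.Finite.prod (Finset.Icc l u).finite_toSet Set.finite_univ))
  rintro p ⟨x, j, hx, rfl⟩
  exact ⟨⟨x, j⟩, ⟨by simpa using (inBox_iff_mem_Icc l u x).1 hx, trivial⟩, rfl⟩

lemma vtx_mem_S {l u : Fin n → ℤ} {h : Fin n → (Fin n → ℤ) → ℝ} {x : Fin n → ℤ}
    (hx : inBox l u x) (j : Fin n) : vtx h x j ∈ Sset l u h := by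
  refine ⟨x, hx, rfl, fun i => le_max_left _ _, fun i => ?_⟩
  have := le_max_right (0:ℝ) (h i x - h j x)
  simp only [vtx]
  linarith

lemma S_add_C {l u : Fin n → ℤ} {h : Fin n → (Fin n → ℤ) → ℝ} {p c : EE n}
    (hp : p ∈ Sset l u h) (hc : c ∈ Cset n) : p + c ∈ Sset l u h := by
  obtain ⟨x, hx, hxe, hy, hw⟩ := hp
  obtain ⟨hc1, hc2, hc3⟩ := hc
  refine ⟨x, hx, ?_, fun i => ?_, fun i => ?_⟩
  · simp [hc3, hxe]
  · have := hy i; have := hc1 i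
    simp only [Prod.snd_add, Prod.fst_add, Pi.add_apply]
    linarith
  · have := hw i; have := hc2 i
    simp only [Prod.snd_add, Prod.fst_add, Pi.add_apply]
    linarith

lemma C_convex : Convex ℝ (Cset n) := by
  rintro c ⟨h1, h2, h3⟩ d ⟨g1, g2, g3⟩ a b ha hb hab
  refine ⟨fun i => ?_, fun i => ?_, ?_⟩
  · have := h1 i; have := g1 i
    simp only [Prod.snd_add, Prod.fst_add, Pi.add_apply, Prod.smul_snd, Prod.smul_fst,
      Pi.smul_apply, smul_eq_mul]
    nlinarith
  · have := h2 i; have := g2 i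
    simp only [Prod.snd_add, Prod.fst_add, Pi.add_apply, Prod.smul_snd, Prod.smul_fst,
      Pi.smul_apply, smul_eq_mul]
    nlinarith
  · simp [Prod.ext_iff] at h3 g3 ⊢
    simp [h3, g3]

lemma C_add_C {c d : EE n} (hc : c ∈ Cset n) (hd : d ∈ Cset n) : c + d ∈ Cset n := by
  obtain ⟨h1, h2, h3⟩ := hc; obtain ⟨g1, g2, g3⟩ := hd
  refine ⟨fun i => ?_, fun i => ?_, ?_⟩
  · have := h1 i; have := g1 i
    simp only [Prod.snd_add, Prod.fst_add, Pi.add_apply]; linarith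
  · have := h2 i; have := g2 i
    simp only [Prod.snd_add, Prod.fst_add, Pi.add_apply]; linarith
  · simp [h3, g3]

lemma C_smul {c : EE n} {t : ℝ} (ht : 0 ≤ t) (hc : c ∈ Cset n) : t • c ∈ Cset n := by
  obtain ⟨h1, h2, h3⟩ := hc
  refine ⟨fun i => ?_, fun i => ?_, ?_⟩
  · have := h1 i
    simp only [Prod.smul_snd, Prod.smul_fst, Pi.smul_apply, smul_eq_mul]
    nlinarith
  · have := h2 i
    simp only [Prod.smul_snd, Prod.smul_fst, Pi.smul_apply, smul_eq_mul]
    nlinarith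
  · simp [h3]

lemma C_closed : IsClosed (Cset n) := by
  have : Cset n = (⋂ i, {c : EE n | 0 ≤ c.2.1 i}) ∩
      ((⋂ i, {c : EE n | 0 ≤ c.1 + c.2.1 i}) ∩ {c : EE n | c.2.2 = 0}) := by
    ext c; simp [Cset, Set.mem_iInter]
  rw [this]
  have c21 : ∀ i : Fin n, Continuous (fun c : EE n => c.2.1 i) :=
    fun i => (continuous_apply i).comp (continuous_fst.comp continuous_snd)
  refine (isClosed_iInter fun i => isClosed_le continuous_const (c21 i)).inter
    ((isClosed_iInter fun i => isClosed_le continuous_const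
      (continuous_fst.add (c21 i))).inter ?_)
  exact isClosed_eq (continuous_snd.comp continuous_snd) continuous_const

end Stmt15Aux

namespace Stmt15Aux

lemma decomp {n : ℕ} (hn : 0 < n) (l u : Fin n → ℤ) (h : Fin n → (Fin n → ℤ) → ℝ)
    {p : EE n} (hp : p ∈ Sset l u h) :
    ∃ z c, z ∈ convexHull ℝ (Vset l u h) ∧ c ∈ Cset n ∧ p = z + c := by
  classical
  have : Nonempty (Fin n) := Fin.pos_iff_nonempty.1 hn
  obtain ⟨x, hx, hxe, hy, hw⟩ := hp
  -- helper for the single-vertex cases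
  have single : ∀ j0 : Fin n, h j0 x ≤ p.1 →
      (∀ i, 0 ≤ p.2.1 i - max 0 (h i x - h j0 x)) →
      (∀ i, 0 ≤ (p.1 - h j0 x) + (p.2.1 i - max 0 (h i x - h j0 x))) →
      ∃ z c, z ∈ convexHull ℝ (Vset l u h) ∧ c ∈ Cset n ∧ p = z + c := by
    intro j0 hj0w hc1 hc2
    refine ⟨vtx h x j0, (p.1 - h j0 x, fun i => p.2.1 i - max 0 (h i x - h j0 x), 0),
      subset_convexHull ℝ _ ⟨x, j0, hx, rfl⟩, ⟨hc1, hc2, rfl⟩, ?_⟩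
    refine Prod.ext ?_ (Prod.ext ?_ ?_)
    · show p.1 = h j0 x + (p.1 - h j0 x); ring
    · funext i
      show p.2.1 i = max 0 (h i x - h j0 x) + (p.2.1 i - max 0 (h i x - h j0 x)); ring
    · show p.2.2 = (fun i => ((x i : ℝ))) + 0
      rw [hxe]; funext i; simp
  by_cases hA : ∀ j, h j x ≤ p.1
  · obtain ⟨j0, -, hj0⟩ := Finset.exists_max_image Finset.univ (fun j => h j x)
      Finset.univ_nonempty
    refine single j0 (hA j0) (fun i => ?_) (fun i => ?_)
    · have h1 : h i x ≤ h j0 x := hj0 i (Finset.mem_univ i)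
      have h2 : max 0 (h i x - h j0 x) = 0 := max_eq_left (by linarith)
      have := hy i; rw [h2]; linarith
    · have h1 : h i x ≤ h j0 x := hj0 i (Finset.mem_univ i)
      have h2 : max 0 (h i x - h j0 x) = 0 := max_eq_left (by linarith)
      have := hy i; have := hA j0; rw [h2]; linarith
  by_cases hB : ∀ j, p.1 ≤ h j x
  · obtain ⟨j0, -, hj0⟩ := Finset.exists_min_image Finset.univ (fun j => h j x)
      Finset.univ_nonempty
    -- here p.1 may be < h j0 x; the cone allows negative first coordinate
    refine ⟨vtx h x j0, (p.1 - h j0 x, fun i => p.2.1 i - max 0 (h i x - h j0 x), 0),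
      subset_convexHull ℝ _ ⟨x, j0, hx, rfl⟩, ⟨fun i => ?_, fun i => ?_, rfl⟩, ?_⟩
    · show 0 ≤ p.2.1 i - max 0 (h i x - h j0 x)
      have h1 : h j0 x ≤ h i x := hj0 i (Finset.mem_univ i)
      have h2 := hw i; have h3 := hB j0; have := hy i
      rcases max_cases 0 (h i x - h j0 x) with ⟨he, -⟩ | ⟨he, -⟩ <;> rw [he] <;> linarith
    · show 0 ≤ (p.1 - h j0 x) + (p.2.1 i - max 0 (h i x - h j0 x))
      have h1 : h j0 x ≤ h i x := hj0 i (Finset.mem_univ i)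
      have h2 := hw i; have h3 := hB j0; have := hy i
      rcases max_cases 0 (h i x - h j0 x) with ⟨he, -⟩ | ⟨he, -⟩ <;> rw [he] <;> linarith
    · refine Prod.ext ?_ (Prod.ext ?_ ?_)
      · show p.1 = h j0 x + (p.1 - h j0 x); ring
      · funext i
        show p.2.1 i = max 0 (h i x - h j0 x) + (p.2.1 i - max 0 (h i x - h j0 x)); ring
      · show p.2.2 = (fun i => ((x i : ℝ))) + 0
        rw [hxe]; funext i; simp
  push_neg at hA hB
  obtain ⟨jq, hjq⟩ := hA
  obtain ⟨jp, hjp⟩ := hB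
  set Fp := Finset.univ.filter (fun j => h j x ≤ p.1) with hFp
  set Fq := Finset.univ.filter (fun j => p.1 ≤ h j x) with hFq
  obtain ⟨p0, hp0m, hp0max⟩ := Finset.exists_max_image Fp (fun j => h j x)
    ⟨jp, by simp [hFp, le_of_lt hjp]⟩
  obtain ⟨q0, hq0m, hq0min⟩ := Finset.exists_min_image Fq (fun j => h j x)
    ⟨jq, by simp [hFq, le_of_lt hjq]⟩
  have hp0w : h p0 x ≤ p.1 := by simpa [hFp] using (Finset.mem_filter.1 hp0m).2
  have hq0w : p.1 ≤ h q0 x := by simpa [hFq] using (Finset.mem_filter.1 hq0m).2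
  have hclass : ∀ i, h i x ≤ h p0 x ∨ h q0 x ≤ h i x := by
    intro i
    rcases le_total (h i x) p.1 with hc | hc
    · exact Or.inl (hp0max i (by simp [hFp, hc]))
    · exact Or.inr (hq0min i (by simp [hFq, hc]))
  rcases eq_or_lt_of_le (le_trans hp0w hq0w) with heq | hlt
  · -- h p0 x = h q0 x = p.1
    have hp1 : p.1 = h p0 x := le_antisymm (by rw [heq]; exact hq0w) hp0w
    refine single p0 hp0w (fun i => ?_) (fun i => ?_)
    · have := hy i; have h2 := hw i
      rcases max_cases 0 (h i x - h p0 x) with ⟨he, -⟩ | ⟨he, -⟩ <;> rw [he] <;> linarith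
    · have := hy i; have h2 := hw i
      rcases max_cases 0 (h i x - h p0 x) with ⟨he, -⟩ | ⟨he, -⟩ <;> rw [he] <;> linarith
  · set A := h p0 x with hA'
    set B := h q0 x with hB'
    set L := (B - p.1) / (B - A) with hL
    have hden : 0 < B - A := by linarith
    have hL0 : 0 ≤ L := div_nonneg (by linarith) (by linarith)
    have hL1 : L ≤ 1 := by rw [hL, div_le_one hden]; linarith
    have hz1 : L * A + (1 - L) * B = p.1 := by
      field_simp [hL]
      have hm : L * (B - A) = B - p.1 := by rw [hL]; exact div_mul_cancel₀ _ (ne_of_gt hden)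
      linarith
    set z : EE n := (p.1,
      fun i => L * max 0 (h i x - A) + (1 - L) * max 0 (h i x - B), p.2.2) with hzdef
    have hv1 : vtx h x p0 ∈ convexHull ℝ (Vset l u h) :=
      subset_convexHull ℝ _ ⟨x, p0, hx, rfl⟩
    have hv2 : vtx h x q0 ∈ convexHull ℝ (Vset l u h) :=
      subset_convexHull ℝ _ ⟨x, q0, hx, rfl⟩
    have hzmem : z ∈ convexHull ℝ (Vset l u h) := by
      have hze : z = L • vtx h x p0 + (1 - L) • vtx h x q0 := by
        refine Prod.ext ?_ (Prod.ext ?_ ?_)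
        · show p.1 = L • (h p0 x) + (1 - L) • (h q0 x)
          rw [smul_eq_mul, smul_eq_mul, ← hA', ← hB', hz1]
        · funext i
          show L * max 0 (h i x - A) + (1 - L) * max 0 (h i x - B)
            = (L • fun i => max 0 (h i x - h p0 x)) i + ((1 - L) • fun i => max 0 (h i x - h q0 x)) i
          simp [← hA', ← hB']
        · show p.2.2 = (L • fun i => ((x i : ℝ))) + ((1 - L) • fun i => ((x i : ℝ)))
          rw [hxe]; funext i
          simp only [Pi.add_apply, Pi.smul_apply, smul_eq_mul]
          ring
      rw [hze]
      exact (convex_convexHull ℝ _) hv1 hv2 hL0 (by linarith) (by ring)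
    have hczi : ∀ i, z.2.1 i ≤ p.2.1 i := by
      intro i
      have hzy : z.2.1 i = L * max 0 (h i x - A) + (1 - L) * max 0 (h i x - B) := rfl
      rcases hclass i with hc | hc
      · have e1 : max 0 (h i x - A) = 0 := max_eq_left (by linarith)
        have e2 : max 0 (h i x - B) = 0 := max_eq_left (by linarith)
        rw [hzy, e1, e2]; have := hy i; linarith
      · have e1 : max 0 (h i x - A) = h i x - A := max_eq_right (by linarith)
        have e2 : max 0 (h i x - B) = h i x - B := max_eq_right (by linarith)
        have e3 : L * (h i x - A) + (1 - L) * (h i x - B)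
            = h i x - (L * A + (1 - L) * B) := by ring
        have h2 := hw i
        rw [hzy, e1, e2, e3, hz1]; linarith
    refine ⟨z, (0, fun i => p.2.1 i - z.2.1 i, 0), hzmem,
      ⟨fun i => ?_, fun i => ?_, rfl⟩, ?_⟩
    · show 0 ≤ p.2.1 i - z.2.1 i
      have := hczi i; linarith
    · show 0 ≤ 0 + (p.2.1 i - z.2.1 i)
      have := hczi i; linarith
    · refine Prod.ext ?_ (Prod.ext ?_ ?_)
      · show p.1 = z.1 + 0
        simp [hzdef]
      · funext i
        show p.2.1 i = z.2.1 i + (p.2.1 i - z.2.1 i); ring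
      · show p.2.2 = z.2.2 + 0
        simp [hzdef]

end Stmt15Aux

namespace Stmt15Aux
open Pointwise

lemma V_subset_S (l u : Fin n → ℤ) (h : Fin n → (Fin n → ℤ) → ℝ) :
    Vset l u h ⊆ Sset l u h := by
  rintro p ⟨x, j, hx, rfl⟩; exact vtx_mem_S hx j

lemma convS_eq (hn : 0 < n) (l u : Fin n → ℤ) (h : Fin n → (Fin n → ℤ) → ℝ) :
    convexHull ℝ (Sset l u h) = convexHull ℝ (Vset l u h) + Cset n := by
  apply Set.Subset.antisymm
  · apply convexHull_min
    · intro p hp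
      obtain ⟨z, c, hz, hc, rfl⟩ := decomp hn l u h hp
      exact Set.add_mem_add hz hc
    · exact (convex_convexHull ℝ _).add C_convex
  · have h1 : convexHull ℝ (Vset l u h) + Cset n
        = convexHull ℝ (Vset l u h) + convexHull ℝ (Cset n) := by
      rw [C_convex.convexHull_eq]
    rw [h1, ← convexHull_add]
    apply convexHull_mono
    rintro _ ⟨v, hv, c, hc, rfl⟩
    exact S_add_C (V_subset_S l u h hv) hc

lemma convS_closed (hn : 0 < n) (l u : Fin n → ℤ) (h : Fin n → (Fin n → ℤ) → ℝ) :
    IsClosed (convexHull ℝ (Sset l u h)) := by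
  rw [convS_eq hn]
  exact IsClosed.add_left_of_isCompact C_closed ((vset_finite l u h).isCompact_convexHull ℝ)

lemma convS_add_C (hn : 0 < n) (l u : Fin n → ℤ) (h : Fin n → (Fin n → ℤ) → ℝ)
    {p c : EE n} (hp : p ∈ convexHull ℝ (Sset l u h)) (hc : c ∈ Cset n) :
    p + c ∈ convexHull ℝ (Sset l u h) := by
  rw [convS_eq hn] at hp ⊢
  obtain ⟨z, hz, c0, hc0, rfl⟩ := hp
  exact ⟨z, hz, c0 + c, C_add_C hc0 hc, (add_assoc _ _ _).symm⟩

lemma minFormula (hn : 0 < n) (h : Fin n → (Fin n → ℤ) → ℝ) (x : Fin n → ℤ)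
    (w : ℝ) (y : Fin n → ℝ) (hy : ∀ i, 0 ≤ y i) (hw : ∀ i, h i x - y i ≤ w)
    (u₀ : ℝ) (v : Fin n → ℝ) (hu0 : 0 ≤ u₀) (hv : ∀ i, 0 ≤ v i)
    (huv : u₀ ≤ ∑ i, v i) :
    (⨅ j, u₀ * h j x + ∑ i, v i * max 0 (h i x - h j x))
      ≤ u₀ * w + ∑ i, v i * y i := by
  classical
  have : Nonempty (Fin n) := Fin.pos_iff_nonempty.1 hn
  have hstep : ∑ i, v i * max 0 (h i x - w) ≤ ∑ i, v i * y i :=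
    Finset.sum_le_sum fun i _ =>
      mul_le_mul_of_nonneg_left (max_le (hy i) (by linarith [hw i])) (hv i)
  suffices hex : ∃ j, u₀ * h j x + ∑ i, v i * max 0 (h i x - h j x)
      ≤ u₀ * w + ∑ i, v i * max 0 (h i x - w) by
    obtain ⟨j, hj⟩ := hex
    exact le_trans (ciInf_le (Finite.bddBelow_range _) j) (by linarith)
  by_cases hA : ∀ j, h j x ≤ w
  · obtain ⟨j0, -, hj0⟩ := Finset.exists_max_image Finset.univ (fun j => h j x)
      Finset.univ_nonempty
    refine ⟨j0, ?_⟩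
    have e1 : ∑ i, v i * max 0 (h i x - h j0 x) = 0 :=
      Finset.sum_eq_zero fun i _ => by
        rw [max_eq_left (by linarith [hj0 i (Finset.mem_univ i)])]; ring
    have e2 : (0:ℝ) ≤ ∑ i, v i * max 0 (h i x - w) :=
      Finset.sum_nonneg fun i _ => mul_nonneg (hv i) (le_max_left _ _)
    have e3 : u₀ * h j0 x ≤ u₀ * w := mul_le_mul_of_nonneg_left (hA j0) hu0
    rw [e1]; linarith
  by_cases hB : ∀ j, w ≤ h j x
  · obtain ⟨j0, -, hj0⟩ := Finset.exists_min_image Finset.univ (fun j => h j x)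
      Finset.univ_nonempty
    refine ⟨j0, ?_⟩
    have e1 : ∑ i, v i * max 0 (h i x - h j0 x)
        = ∑ i, v i * h i x - (∑ i, v i) * h j0 x := by
      rw [Finset.sum_mul]
      rw [← Finset.sum_sub_distrib]
      refine Finset.sum_congr rfl fun i _ => ?_
      rw [max_eq_right (by linarith [hj0 i (Finset.mem_univ i), hB j0])]
      ring
    have e2 : ∑ i, v i * max 0 (h i x - w)
        = ∑ i, v i * h i x - (∑ i, v i) * w := by
      rw [Finset.sum_mul, ← Finset.sum_sub_distrib]
      refine Finset.sum_congr rfl fun i _ => ?_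
      rw [max_eq_right (by linarith [hB i])]
      ring
    rw [e1, e2]
    have e3 : 0 ≤ ((∑ i, v i) - u₀) * (h j0 x - w) :=
      mul_nonneg (by linarith) (by linarith [hB j0])
    nlinarith
  · push_neg at hA hB
    obtain ⟨jq, hjq⟩ := hA
    obtain ⟨jp, hjp⟩ := hB
    set Fp := Finset.univ.filter (fun j => h j x ≤ w) with hFp
    set Fq := Finset.univ.filter (fun j => w ≤ h j x) with hFq
    obtain ⟨p0, hp0m, hp0max⟩ := Finset.exists_max_image Fp (fun j => h j x)
      ⟨jp, by simp [hFp, le_of_lt hjp]⟩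
    obtain ⟨q0, hq0m, hq0min⟩ := Finset.exists_min_image Fq (fun j => h j x)
      ⟨jq, by simp [hFq, le_of_lt hjq]⟩
    have hp0w : h p0 x ≤ w := by simpa [hFp] using (Finset.mem_filter.1 hp0m).2
    have hq0w : w ≤ h q0 x := by simpa [hFq] using (Finset.mem_filter.1 hq0m).2
    have hclass : ∀ i, h i x ≤ h p0 x ∨ h q0 x ≤ h i x := by
      intro i
      rcases le_total (h i x) w with hc | hc
      · exact Or.inl (hp0max i (by simp [hFp, hc]))
      · exact Or.inr (hq0min i (by simp [hFq, hc]))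
    set T := Finset.univ.filter (fun i => h q0 x ≤ h i x) with hT
    have key : ∀ t : ℝ, h p0 x ≤ t → t ≤ h q0 x →
        ∑ i, v i * max 0 (h i x - t)
          = (∑ i ∈ T, v i * h i x) - (∑ i ∈ T, v i) * t := by
      intro t h1 h2
      rw [← Finset.sum_filter_add_sum_filter_not Finset.univ
        (fun i => h q0 x ≤ h i x) (fun i => v i * max 0 (h i x - t))]
      have e2 : ∑ i ∈ Finset.univ.filter (fun i => ¬ h q0 x ≤ h i x),
          v i * max 0 (h i x - t) = 0 := by
        refine Finset.sum_eq_zero fun i hi => ?_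
        have hi' : ¬ h q0 x ≤ h i x := (Finset.mem_filter.1 hi).2
        have : h i x ≤ h p0 x := (hclass i).resolve_right hi'
        rw [max_eq_left (by linarith)]; ring
      have e1 : ∑ i ∈ T, v i * max 0 (h i x - t)
          = (∑ i ∈ T, v i * h i x) - (∑ i ∈ T, v i) * t := by
        rw [Finset.sum_mul, ← Finset.sum_sub_distrib]
        refine Finset.sum_congr rfl fun i hi => ?_
        have hi' : h q0 x ≤ h i x := by simpa [hT] using (Finset.mem_filter.1 hi).2
        rw [max_eq_right (by linarith)]
        ring
      rw [e2, ← hT, e1, add_zero]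
    have kp : ∑ i, v i * max 0 (h i x - h p0 x)
        = (∑ i ∈ T, v i * h i x) - (∑ i ∈ T, v i) * h p0 x :=
      key _ le_rfl (by linarith)
    have kq : ∑ i, v i * max 0 (h i x - h q0 x)
        = (∑ i ∈ T, v i * h i x) - (∑ i ∈ T, v i) * h q0 x :=
      key _ (by linarith) le_rfl
    have kw : ∑ i, v i * max 0 (h i x - w)
        = (∑ i ∈ T, v i * h i x) - (∑ i ∈ T, v i) * w := key _ hp0w hq0w
    rcases le_total 0 (u₀ - ∑ i ∈ T, v i) with hs | hs
    · refine ⟨p0, ?_⟩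
      rw [kp, kw]
      have := mul_nonneg hs (sub_nonneg.2 hp0w)
      nlinarith
    · refine ⟨q0, ?_⟩
      rw [kq, kw]
      have := mul_nonneg (neg_nonneg.2 hs) (sub_nonneg.2 hq0w)
      nlinarith

end Stmt15Aux

namespace Stmt15Aux

variable {n : ℕ}

lemma hsum_single (g : Fin n → ℝ) :
    ∑ i, g i • (Pi.single i (1:ℝ) : Fin n → ℝ) = g := by
  funext k
  rw [Finset.sum_apply]
  have : ∀ i, (g i • (Pi.single i (1:ℝ) : Fin n → ℝ)) k
      = if k = i then g i else 0 := by
    intro i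
    simp [Pi.single_apply, eq_comm]
  simp only [this]
  simp

lemma expand (f : EE n →L[ℝ] ℝ) (p : EE n) :
    f p = p.1 * f (1, 0, 0) + (∑ i, p.2.1 i * f (0, Pi.single i 1, 0))
      + ∑ i, p.2.2 i * f (0, 0, Pi.single i 1) := by
  have hp : p = p.1 • ((1:ℝ), (0 : Fin n → ℝ), (0 : Fin n → ℝ))
      + ((∑ i, p.2.1 i • (((0:ℝ), (Pi.single i (1:ℝ) : Fin n → ℝ), (0 : Fin n → ℝ)) : EE n))
      + ∑ i, p.2.2 i • (((0:ℝ), (0 : Fin n → ℝ), (Pi.single i (1:ℝ) : Fin n → ℝ)) : EE n)) := by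
    refine Prod.ext ?_ (Prod.ext ?_ ?_)
    · simp [Prod.fst_sum]
    · simp only [Prod.snd_add, Prod.fst_add, Prod.snd_sum, Prod.fst_sum,
        Prod.smul_snd, Prod.smul_fst, smul_zero, smul_eq_mul, Prod.mk_add_mk,
        Finset.sum_const_zero]
    
      rw [hsum_single]
      simp
    · simp only [Prod.snd_add, Prod.snd_sum, Prod.smul_snd, smul_zero,
        Finset.sum_const_zero]
      rw [hsum_single]
      simp
  conv_lhs => rw [hp]
  rw [map_add, map_add, map_smul, map_sum, map_sum]
  simp only [map_smul, smul_eq_mul]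
  ring

end Stmt15Aux

open Stmt15Aux in
/-- Convex hull of the mixed-integer epigraph
`𝒫 = {(w, y, x) : x ∈ 𝒳, y ≥ 0, w ≥ hⁱ(x) − yᵢ ∀ i}`, under Assumption 1 (each
`hʲ` and each `max(0, hⁱ − hʲ)` is L♮-convex on `𝒳`): a point `(w, y, x)` with
`l ≤ x ≤ u` lies in the convex hull iff for every `(u₀, v) ≥ 0` with
`u₀ ≤ ∑ᵢ vᵢ`, the point `(x, u₀·w + ∑ᵢ vᵢ·yᵢ)` lies in the convex hull of the
epigraph of `F_{u₀,v}(x) = min_j [u₀·hʲ(x) + ∑ᵢ vᵢ·max(0, hⁱ(x) − hʲ(x))]`. -/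
theorem stmt_15 (n : ℕ) (l u : Fin n → ℤ) (hlu : ∀ i, l i ≤ u i)
    (h : Fin n → (Fin n → ℤ) → ℝ)
    (hA1 : ∀ i j : Fin n, IsLNatOn l u (h j) ∧
      IsLNatOn l u (fun x => max 0 (h i x - h j x))) :
    convexHull ℝ
        {q : ℝ × (Fin n → ℝ) × (Fin n → ℝ) | ∃ x : Fin n → ℤ,
          inBox l u x ∧ q.2.2 = (fun i => (x i : ℝ)) ∧
          (∀ i, 0 ≤ q.2.1 i) ∧ ∀ i, h i x - q.2.1 i ≤ q.1}
      = {q : ℝ × (Fin n → ℝ) × (Fin n → ℝ) |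
          (∀ i, (l i : ℝ) ≤ q.2.2 i ∧ q.2.2 i ≤ (u i : ℝ)) ∧
          ∀ (u₀ : ℝ) (v : Fin n → ℝ), 0 ≤ u₀ → (∀ i, 0 ≤ v i) →
            u₀ ≤ ∑ i, v i →
            (q.2.2, u₀ * q.1 + ∑ i, v i * q.2.1 i) ∈
              convexHull ℝ (epiSet l u (fun x =>
                ⨅ j : Fin n,
                  (u₀ * h j x + ∑ i, v i * max 0 (h i x - h j x))))} := by

  classical
  have hSdef : {q : ℝ × (Fin n → ℝ) × (Fin n → ℝ) | ∃ x : Fin n → ℤ,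
      inBox l u x ∧ q.2.2 = (fun i => (x i : ℝ)) ∧
      (∀ i, 0 ≤ q.2.1 i) ∧ ∀ i, h i x - q.2.1 i ≤ q.1} = Sset l u h := rfl
  rw [hSdef]
  rcases Nat.eq_zero_or_pos n with hn0 | hn
  · subst hn0
    have hS : Sset l u h = Set.univ := by
      ext q
      simp only [Sset, Set.mem_setOf_eq, Set.mem_univ, iff_true]
      exact ⟨l, fun i => i.elim0, funext fun i => i.elim0,
        fun i => i.elim0, fun i => i.elim0⟩
    rw [hS, convexHull_univ]
    refine (Set.eq_univ_iff_forall.2 fun q => ?_).symm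
    refine ⟨fun i => i.elim0, ?_⟩
    intro u₀ v hu0 hv huv
    have hsum0 : ∑ i : Fin 0, v i = 0 := by simp
    have hu00 : u₀ = 0 := le_antisymm (by rw [← hsum0]; exact huv) hu0
    apply subset_convexHull
    refine ⟨l, fun i => i.elim0, funext fun i => i.elim0, ?_⟩
    show (⨅ j : Fin 0, (u₀ * h j l + ∑ i, v i * max 0 (h i l - h j l)))
      ≤ (q.2.2, u₀ * q.1 + ∑ i, v i * q.2.1 i).2
    rw [Real.iInf_of_isEmpty]
    simp [hu00]
  · have hne : Nonempty (Fin n) := Fin.pos_iff_nonempty.1 hn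
    apply Set.Subset.antisymm
    · -- easy direction
      intro q hq
      constructor
      · have hsub : Sset l u h
            ⊆ {q : EE n | ∀ i, (l i:ℝ) ≤ q.2.2 i ∧ q.2.2 i ≤ (u i : ℝ)} := by
          rintro p ⟨x, hx, hxe, -, -⟩ i
          rw [hxe]
          constructor
          · show (l i : ℝ) ≤ ((x i : ℤ) : ℝ)
            exact_mod_cast (hx i).1
          · show ((x i : ℤ) : ℝ) ≤ (u i : ℝ)
            exact_mod_cast (hx i).2
        have hcvx : Convex ℝ {q : EE n | ∀ i, (l i:ℝ) ≤ q.2.2 i ∧ q.2.2 i ≤ (u i : ℝ)} := by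
          intro a ha b hb s t hs ht hst i
          have h1 := ha i; have h2 := hb i
          have e : (s • a + t • b).2.2 i = s * a.2.2 i + t * b.2.2 i := by
            simp
          rw [e]
          have hl : s * (l i : ℝ) + t * (l i : ℝ) = (l i : ℝ) := by
            rw [← add_mul, hst, one_mul]
          have hu' : s * (u i : ℝ) + t * (u i : ℝ) = (u i : ℝ) := by
            rw [← add_mul, hst, one_mul]
          constructor
          · have e1 := mul_le_mul_of_nonneg_left h1.1 hs
            have e2 := mul_le_mul_of_nonneg_left h2.1 ht
            linarith
          · have e1 := mul_le_mul_of_nonneg_left h1.2 hs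
            have e2 := mul_le_mul_of_nonneg_left h2.2 ht
            linarith
        exact convexHull_min hsub hcvx hq
      · intro u₀ v hu0 hv huv
        set Φ : EE n →ₗ[ℝ] (Fin n → ℝ) × ℝ := {
          toFun := fun p => (p.2.2, u₀ * p.1 + ∑ i, v i * p.2.1 i)
          map_add' := by
            intro a b
            refine Prod.ext rfl ?_
            show u₀ * (a + b).1 + ∑ i, v i * (a + b).2.1 i
              = (u₀ * a.1 + ∑ i, v i * a.2.1 i) + (u₀ * b.1 + ∑ i, v i * b.2.1 i)
            simp only [Prod.fst_add, Prod.snd_add, Pi.add_apply]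
            rw [Finset.sum_congr rfl fun i _ =>
              (by ring : v i * (a.2.1 i + b.2.1 i) = v i * a.2.1 i + v i * b.2.1 i),
              Finset.sum_add_distrib]
            ring
          map_smul' := by
            intro s a
            refine Prod.ext rfl ?_
            show u₀ * (s • a).1 + ∑ i, v i * (s • a).2.1 i
              = s • (u₀ * a.1 + ∑ i, v i * a.2.1 i)
            simp only [Prod.smul_fst, Prod.smul_snd, Pi.smul_apply, smul_eq_mul]
            rw [Finset.sum_congr rfl fun i _ =>
              (by ring : v i * (s * a.2.1 i) = s * (v i * a.2.1 i)),
              ← Finset.mul_sum]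
            ring } with hΦ
        have himg : Φ '' (Sset l u h) ⊆ epiSet l u (fun x =>
            ⨅ j : Fin n, (u₀ * h j x + ∑ i, v i * max 0 (h i x - h j x))) := by
          rintro _ ⟨p, ⟨x, hx, hxe, hy, hw⟩, rfl⟩
          refine ⟨x, hx, hxe, ?_⟩
          exact minFormula hn h x p.1 p.2.1 hy hw u₀ v hu0 hv huv
        have hmem : Φ q ∈ convexHull ℝ (epiSet l u (fun x =>
            ⨅ j : Fin n, (u₀ * h j x + ∑ i, v i * max 0 (h i x - h j x)))) := by
          have h1 := Set.mem_image_of_mem Φ hq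
          rw [Φ.image_convexHull] at h1
          exact convexHull_mono himg h1
        exact hmem
    · -- hard direction
      intro q hq
      by_contra hout
      obtain ⟨f, d, hfS, hfq⟩ := geometric_hahn_banach_closed_point
        (convex_convexHull ℝ _) (convS_closed hn l u h) hout
      have p0S : ((0:ℝ), (fun i => max 0 (h i l)), fun i => ((l i : ℝ))) ∈ Sset l u h :=
        ⟨l, fun i => ⟨le_refl _, hlu i⟩, rfl, fun i => le_max_left _ _,
          fun i => by simpa using le_max_right 0 (h i l)⟩
      have hp₀ : ((0:ℝ), (fun i => max 0 (h i l)), fun i => ((l i : ℝ)))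
          ∈ convexHull ℝ (Sset l u h) := subset_convexHull ℝ _ p0S
      set p₀ : EE n := ((0:ℝ), (fun i => max 0 (h i l)), fun i => ((l i : ℝ))) with hp₀def
      have hcone : ∀ c ∈ Cset n, f c ≤ 0 := by
        intro c hc
        by_contra hpos
        push_neg at hpos
        have hdp : f p₀ < d := hfS _ hp₀
        have key : ∀ t : ℝ, 0 ≤ t → f p₀ + t * f c < d := by
          intro t ht'
          have := hfS _ (convS_add_C hn l u h hp₀ (C_smul ht' hc))
          rwa [map_add, map_smul, smul_eq_mul] at this
        have h1 : (0:ℝ) ≤ (d - f p₀) / f c := le_of_lt (div_pos (by linarith) hpos)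
        have h2 := key _ h1
        rw [div_mul_cancel₀ _ (ne_of_gt hpos)] at h2
        linarith
      set u₀ := -(f (1, 0, 0)) with hu₀def
      set v : Fin n → ℝ := fun i => -(f (0, Pi.single i 1, 0)) with hvdef
      set γ : Fin n → ℝ := fun i => -(f (0, 0, Pi.single i 1)) with hγdef
      have hu0 : 0 ≤ u₀ := by
        have := hcone ((1:ℝ), (0 : Fin n → ℝ), (0 : Fin n → ℝ))
          ⟨fun i => le_refl 0, fun i => by norm_num, rfl⟩
        simp only [hu₀def]; linarith
      have hvi : ∀ i, 0 ≤ v i := by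
        intro i
        have hsingle : ∀ j, (0:ℝ) ≤ (Pi.single i (1:ℝ) : Fin n → ℝ) j := by
          intro j
          rcases eq_or_ne i j with rfl | hne'
          · simp
          · simp [Pi.single_apply, Ne.symm hne']
        have := hcone ((0:ℝ), (Pi.single i (1:ℝ) : Fin n → ℝ), (0 : Fin n → ℝ))
          ⟨hsingle, fun j => by simpa using hsingle j, rfl⟩
        simp only [hvdef]; linarith
      have hfexp : ∀ p : EE n, f p
          = -(p.1 * u₀ + (∑ i, p.2.1 i * v i) + ∑ i, p.2.2 i * γ i) := by
        intro p
        rw [expand f p]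
        simp only [hu₀def, hvdef, hγdef, mul_neg]
        rw [Finset.sum_neg_distrib, Finset.sum_neg_distrib]
        ring
      have huv : u₀ ≤ ∑ i, v i := by
        have hc : ((-1:ℝ), ((fun _ => (1:ℝ)) : Fin n → ℝ), (0:Fin n → ℝ)) ∈ Cset n :=
          ⟨fun i => zero_le_one, fun i => by norm_num, rfl⟩
        have h1 := hcone _ hc
        rw [hfexp _] at h1
        simp only [neg_le, neg_zero] at h1
        have h2 : ((-1:ℝ), ((fun _ => (1:ℝ)) : Fin n → ℝ), (0:Fin n → ℝ)).1 * u₀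
            + (∑ i, ((-1:ℝ), ((fun _ => (1:ℝ)) : Fin n → ℝ), (0:Fin n → ℝ)).2.1 i * v i)
            + ∑ i, ((-1:ℝ), ((fun _ => (1:ℝ)) : Fin n → ℝ), (0:Fin n → ℝ)).2.2 i * γ i
            = -u₀ + ∑ i, v i := by
          simp
        rw [h2] at h1
        linarith
      obtain ⟨hbounds, hcond⟩ := hq
      have hmain := hcond u₀ v hu0 hvi huv
      set F : (Fin n → ℤ) → ℝ := fun x =>
        ⨅ j : Fin n, (u₀ * h j x + ∑ i, v i * max 0 (h i x - h j x)) with hF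
      set HS : Set ((Fin n → ℝ) × ℝ) := {p | -d ≤ (∑ i, γ i * p.1 i) + p.2} with hHS
      have hHSconv : Convex ℝ HS := by
        intro a ha b hb s t hs ht hst
        simp only [hHS, Set.mem_setOf_eq] at ha hb ⊢
        have e : (∑ i, γ i * (s • a + t • b).1 i) + (s • a + t • b).2
            = s * ((∑ i, γ i * a.1 i) + a.2) + t * ((∑ i, γ i * b.1 i) + b.2) := by
          simp only [Prod.fst_add, Prod.snd_add, Prod.smul_fst, Prod.smul_snd,
            Pi.add_apply, Pi.smul_apply, smul_eq_mul]
          rw [Finset.sum_congr rfl fun i _ =>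
            (by ring : γ i * (s * a.1 i + t * b.1 i)
              = s * (γ i * a.1 i) + t * (γ i * b.1 i)),
            Finset.sum_add_distrib, ← Finset.mul_sum, ← Finset.mul_sum]
          ring
        rw [e]
        have hd : s * (-d) + t * (-d) = -d := by rw [← add_mul, hst]; ring
        have e1 := mul_le_mul_of_nonneg_left ha hs
        have e2 := mul_le_mul_of_nonneg_left hb ht
        linarith
      have hHSsub : epiSet l u F ⊆ HS := by
        rintro ⟨xr, s⟩ ⟨x, hx, hxe, hfs⟩
        simp only [hHS, Set.mem_setOf_eq]
        have hFx : -d - ∑ i, γ i * xr i ≤ F x := by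
          rw [hF]
          refine le_ciInf fun j => ?_
          have hvtx := hfS _ (subset_convexHull ℝ _ (vtx_mem_S hx j))
          rw [hfexp _] at hvtx
          have e : (vtx h x j).1 * u₀ + (∑ i, (vtx h x j).2.1 i * v i)
              + ∑ i, (vtx h x j).2.2 i * γ i
              = (u₀ * h j x + ∑ i, v i * max 0 (h i x - h j x)) + ∑ i, γ i * xr i := by
            have c1 : ∑ i, (vtx h x j).2.1 i * v i
                = ∑ i, v i * max 0 (h i x - h j x) :=
              Finset.sum_congr rfl fun i _ => mul_comm _ _
            have hxe' : xr = fun i => ((x i : ℝ)) := hxe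
            have c2 : ∑ i, (vtx h x j).2.2 i * γ i = ∑ i, γ i * xr i := by
              rw [hxe']
              exact Finset.sum_congr rfl fun i _ => mul_comm _ _
            rw [c1, c2, mul_comm ((vtx h x j).1) u₀]
            rfl
          rw [e] at hvtx
          linarith
        simp only at hfs
        linarith [le_trans hFx hfs]
      have hin := convexHull_min hHSsub hHSconv hmain
      simp only [hHS, Set.mem_setOf_eq] at hin
      have hfqe := hfexp q
      have e2 : ∑ i, q.2.1 i * v i = ∑ i, v i * q.2.1 i :=
        Finset.sum_congr rfl fun i _ => mul_comm _ _
      have e3 : ∑ i, q.2.2 i * γ i = ∑ i, γ i * q.2.2 i :=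
        Finset.sum_congr rfl fun i _ => mul_comm _ _
      rw [e2, e3] at hfqe
      rw [hfqe] at hfq
      linarith
end

section
/- Let n ≥ 1, h ∈ ℝⁿ, u₀ > 0, and u ∈ ℝⁿ with u ≥ 0 and u₀ ≤ Σ_{i=1}^n uᵢ. Let σ be a permutation of {1,…,n} with h_{σ(1)} ≥ h_{σ(2)} ≥ … ≥ h_{σ(n)}, and let j* ∈ {1,…,n} satisfy Σ_{i=1}^{j*−1} u_{σ(i)} < u₀ and Σ_{i=1}^{j*} u_{σ(i)} ≥ u₀. Then min_{j∈{1,…,n}} [ u₀·h_j + Σ_{i=1}^n uᵢ·max(0, hᵢ − h_j) ] = u₀·h_{σ(j*)} + Σ_{i=1}^{j*−1} u_{σ(i)}·(h_{σ(i)} − h_{σ(j*)}). Moreover, if instead u₀ = 0 (and u ≥ 0), then min_{j∈{1,…,n}} Σ_{i=1}^n uᵢ·max(0, hᵢ − h_j) = 0. -/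
/-- Closed form for `F_{u₀,u}(h) = min_j [u₀·h_j + ∑ᵢ uᵢ·max(0, hᵢ − h_j)]`.
With `σ` sorting `h` in descending order and `j*` the breakpoint index
(1-based `j*` corresponds to the 0-based index `jstar` here, so
`Σ_{i=1}^{j*−1}` becomes the sum over indices `< jstar` and `Σ_{i=1}^{j*}` the
sum over indices `≤ jstar`), the minimum equals
`u₀·h_{σ(j*)} + Σ_{i<j*} u_{σ(i)}·(h_{σ(i)} − h_{σ(j*)})`.
Moreover, if instead `u₀ = 0`, the minimum is `0`. -/
theorem stmt_16 (n : ℕ) (hn : 1 ≤ n) (h u : Fin n → ℝ) (hu : ∀ i, 0 ≤ u i)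
    (u₀ : ℝ) (hu₀ : 0 < u₀) (hsum : u₀ ≤ ∑ i, u i)
    (σ : Equiv.Perm (Fin n)) (hσ : ∀ i j : Fin n, i ≤ j → h (σ j) ≤ h (σ i))
    (jstar : Fin n)
    (hj1 : ∑ i ∈ Finset.univ.filter (fun i : Fin n => (i : ℕ) < (jstar : ℕ)),
      u (σ i) < u₀)
    (hj2 : u₀ ≤ ∑ i ∈ Finset.univ.filter (fun i : Fin n => (i : ℕ) ≤ (jstar : ℕ)),
      u (σ i)) :
    ((⨅ j : Fin n, (u₀ * h j + ∑ i, u i * max 0 (h i - h j)))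
        = u₀ * h (σ jstar)
          + ∑ i ∈ Finset.univ.filter (fun i : Fin n => (i : ℕ) < (jstar : ℕ)),
              u (σ i) * (h (σ i) - h (σ jstar))) ∧
      (⨅ j : Fin n, ∑ i, u i * max 0 (h i - h j)) = 0 := by
  classical
  haveI : Nonempty (Fin n) := ⟨⟨0, hn⟩⟩
  set hs := h (σ jstar) with hhs
  -- u₀ ≤ sum of u over indices with h i ≥ hs
  have hAle : u₀ ≤ ∑ i ∈ Finset.univ.filter (fun i : Fin n => hs ≤ h i), u i := by
    refine hj2.trans ?_
    rw [show (∑ i ∈ Finset.univ.filter (fun i : Fin n => (i : ℕ) ≤ (jstar : ℕ)), u (σ i))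
        = ∑ i ∈ (Finset.univ.filter (fun i : Fin n => (i : ℕ) ≤ (jstar : ℕ))).image σ, u i from
      (Finset.sum_image (fun a _ b _ hab => σ.injective hab)).symm]
    apply Finset.sum_le_sum_of_subset_of_nonneg
    · intro x hx
      simp only [Finset.mem_image, Finset.mem_filter, Finset.mem_univ, true_and] at hx ⊢
      obtain ⟨k, hk, rfl⟩ := hx
      exact hσ k jstar (Fin.le_def.mpr hk)
    · intro i _ _; exact hu i
  -- sum of u over indices with h i > hs is < u₀
  have hBlt : (∑ i ∈ Finset.univ.filter (fun i : Fin n => hs < h i), u i) < u₀ := by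
    refine lt_of_le_of_lt ?_ hj1
    rw [show (∑ i ∈ Finset.univ.filter (fun i : Fin n => (i : ℕ) < (jstar : ℕ)), u (σ i))
        = ∑ i ∈ (Finset.univ.filter (fun i : Fin n => (i : ℕ) < (jstar : ℕ))).image σ, u i from
      (Finset.sum_image (fun a _ b _ hab => σ.injective hab)).symm]
    apply Finset.sum_le_sum_of_subset_of_nonneg
    · intro x hx
      simp only [Finset.mem_image, Finset.mem_filter, Finset.mem_univ, true_and] at hx ⊢
      refine ⟨σ.symm x, ?_, by simp⟩
      by_contra hcon
      have hle : jstar ≤ σ.symm x := Fin.le_def.mpr (not_lt.mp hcon)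
      have := hσ jstar (σ.symm x) hle
      rw [Equiv.apply_symm_apply] at this
      exact absurd hx (not_lt.mpr this)
    · intro i _ _; exact hu i
  -- value at σ jstar equals the claimed closed form
  have hVal : (∑ i, u i * max 0 (h i - hs))
      = ∑ i ∈ Finset.univ.filter (fun i : Fin n => (i : ℕ) < (jstar : ℕ)),
          u (σ i) * (h (σ i) - hs) := by
    rw [← Equiv.sum_comp σ (fun i => u i * max 0 (h i - hs)),
      ← Finset.sum_filter_add_sum_filter_not Finset.univ
        (fun i : Fin n => (i : ℕ) < (jstar : ℕ))]
    have h2 : (∑ i ∈ Finset.univ.filter (fun i : Fin n => ¬ (i : ℕ) < (jstar : ℕ)),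
        u (σ i) * max 0 (h (σ i) - hs)) = 0 := by
      apply Finset.sum_eq_zero
      intro i hi
      simp only [Finset.mem_filter, Finset.mem_univ, true_and, not_lt] at hi
      have : h (σ i) ≤ hs := hσ jstar i (Fin.le_def.mpr hi)
      rw [max_eq_left (by linarith), mul_zero]
    rw [h2, add_zero]
    apply Finset.sum_congr rfl
    intro i hi
    simp only [Finset.mem_filter, Finset.mem_univ, true_and] at hi
    have : hs ≤ h (σ i) := hσ i jstar (Fin.le_def.mpr hi.le)
    rw [max_eq_right (by linarith)]
  -- main inequality: the value at σ jstar is the minimum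
  have hmain : ∀ j : Fin n, u₀ * hs + ∑ i, u i * max 0 (h i - hs)
      ≤ u₀ * h j + ∑ i, u i * max 0 (h i - h j) := by
    intro j
    have hexpand : (∑ i, u i * (max 0 (h i - h j) - max 0 (h i - hs)))
        = (∑ i, u i * max 0 (h i - h j)) - ∑ i, u i * max 0 (h i - hs) := by
      simp [mul_sub, Finset.sum_sub_distrib]
    rcases le_or_gt (h j) hs with hc | hc
    · have key : u₀ * (hs - h j) ≤ ∑ i, u i * (max 0 (h i - h j) - max 0 (h i - hs)) := by
        calc u₀ * (hs - h j)
            ≤ (∑ i ∈ Finset.univ.filter (fun i : Fin n => hs ≤ h i), u i) * (hs - h j) :=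
              mul_le_mul_of_nonneg_right hAle (by linarith)
          _ = ∑ i ∈ Finset.univ.filter (fun i : Fin n => hs ≤ h i), u i * (hs - h j) :=
              Finset.sum_mul ..
          _ ≤ ∑ i ∈ Finset.univ.filter (fun i : Fin n => hs ≤ h i),
                u i * (max 0 (h i - h j) - max 0 (h i - hs)) := by
              apply Finset.sum_le_sum
              intro i hi
              simp only [Finset.mem_filter, Finset.mem_univ, true_and] at hi
              rw [max_eq_right (by linarith), max_eq_right (by linarith)]
              apply le_of_eq; ring_nf
          _ ≤ ∑ i, u i * (max 0 (h i - h j) - max 0 (h i - hs)) := by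
              apply Finset.sum_le_sum_of_subset_of_nonneg (Finset.filter_subset _ _)
              intro i _ _
              apply mul_nonneg (hu i)
              have : max 0 (h i - hs) ≤ max 0 (h i - h j) :=
                max_le_max le_rfl (by linarith)
              linarith
      rw [hexpand] at key
      linarith
    · have key : (∑ i, u i * (max 0 (h i - hs) - max 0 (h i - h j))) ≤ u₀ * (h j - hs) := by
        calc (∑ i, u i * (max 0 (h i - hs) - max 0 (h i - h j)))
            = (∑ i ∈ Finset.univ.filter (fun i : Fin n => hs < h i),
                u i * (max 0 (h i - hs) - max 0 (h i - h j)))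
              + ∑ i ∈ Finset.univ.filter (fun i : Fin n => ¬ hs < h i),
                u i * (max 0 (h i - hs) - max 0 (h i - h j)) :=
              (Finset.sum_filter_add_sum_filter_not ..).symm
          _ ≤ (∑ i ∈ Finset.univ.filter (fun i : Fin n => hs < h i),
                u i * (h j - hs)) + 0 := by
              apply add_le_add
              · apply Finset.sum_le_sum
                intro i hi
                simp only [Finset.mem_filter, Finset.mem_univ, true_and] at hi
                apply mul_le_mul_of_nonneg_left _ (hu i)
                rw [max_eq_right (by linarith)]
                have h1 : h i - h j ≤ max 0 (h i - h j) := le_max_right _ _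
                linarith
              · apply Finset.sum_nonpos
                intro i hi
                simp only [Finset.mem_filter, Finset.mem_univ, true_and, not_lt] at hi
                apply mul_nonpos_of_nonneg_of_nonpos (hu i)
                rw [max_eq_left (by linarith)]
                have : (0:ℝ) ≤ max 0 (h i - h j) := le_max_left _ _
                linarith
          _ = (∑ i ∈ Finset.univ.filter (fun i : Fin n => hs < h i), u i) * (h j - hs) := by
              rw [add_zero, Finset.sum_mul]
          _ ≤ u₀ * (h j - hs) :=
              mul_le_mul_of_nonneg_right hBlt.le (by linarith)
      have key' : u₀ * (hs - h j) ≤ ∑ i, u i * (max 0 (h i - h j) - max 0 (h i - hs)) := by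
        have : (∑ i, u i * (max 0 (h i - hs) - max 0 (h i - h j)))
            = - ∑ i, u i * (max 0 (h i - h j) - max 0 (h i - hs)) := by
          rw [← Finset.sum_neg_distrib]
          apply Finset.sum_congr rfl
          intro i _; ring
        rw [this] at key
        linarith
      rw [hexpand] at key'
      linarith
  constructor
  · have hbdd : BddBelow (Set.range fun j : Fin n =>
        u₀ * h j + ∑ i, u i * max 0 (h i - h j)) :=
      (Set.finite_range _).bddBelow
    apply le_antisymm
    · calc (⨅ j : Fin n, (u₀ * h j + ∑ i, u i * max 0 (h i - h j)))
          ≤ u₀ * h (σ jstar) + ∑ i, u i * max 0 (h i - h (σ jstar)) := ciInf_le hbdd _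
        _ = _ := by rw [← hhs, hVal]
    · apply le_ciInf
      intro j
      have := hmain j
      rw [hVal] at this
      exact this
  · apply le_antisymm
    · have hbdd : BddBelow (Set.range fun j : Fin n =>
          ∑ i, u i * max 0 (h i - h j)) := (Set.finite_range _).bddBelow
      calc (⨅ j : Fin n, ∑ i, u i * max 0 (h i - h j))
          ≤ ∑ i, u i * max 0 (h i - h (σ ⟨0, hn⟩)) := ciInf_le hbdd _
        _ = 0 := by
            apply Finset.sum_eq_zero
            intro i _
            have : h i ≤ h (σ ⟨0, hn⟩) := by
              have := hσ ⟨0, hn⟩ (σ.symm i) (Fin.le_def.mpr (Nat.zero_le _))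
              rwa [Equiv.apply_symm_apply] at this
            rw [max_eq_left (by linarith), mul_zero]
    · apply le_ciInf
      intro j
      apply Finset.sum_nonneg
      intro i _
      exact mul_nonneg (hu i) (le_max_left _ _)
end

section
/- Let n ≥ 1, h ∈ ℝⁿ, let Γ ⊆ {1,…,n} be nonempty, and let u₀ be an integer with 1 ≤ u₀ ≤ |Γ|. Then min_{j∈{1,…,n}} [ u₀·h_j + Σ_{i∈Γ} max(0, hᵢ − h_j) ] = max { Σ_{i∈S} hᵢ : S ⊆ Γ, |S| = u₀ }. That is, with weight vector u equal to the indicator vector of Γ, the value F_{u₀,u} at h is the sum of the u₀ largest entries of h over Γ. -/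
/-- For a nonempty `Γ ⊆ {1,…,n}` and an integer `1 ≤ u₀ ≤ |Γ|`,
`min_j [u₀·h_j + ∑_{i∈Γ} max(0, hᵢ − h_j)]` equals the maximum of `∑_{i∈S} hᵢ`
over all `S ⊆ Γ` with `|S| = u₀`, i.e., the sum of the `u₀` largest entries of
`h` over `Γ`. -/
theorem stmt_17 (n : ℕ) (hn : 1 ≤ n) (h : Fin n → ℝ)
    (Γ : Finset (Fin n)) (hΓ : Γ.Nonempty)
    (u₀ : ℕ) (hu₀1 : 1 ≤ u₀) (hu₀2 : u₀ ≤ Γ.card) :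
    (⨅ j : Fin n, ((u₀ : ℝ) * h j + ∑ i ∈ Γ, max 0 (h i - h j)))
      = ⨆ S : {S : Finset (Fin n) // S ⊆ Γ ∧ S.card = u₀},
          ∑ i ∈ (S : Finset (Fin n)), h i := by
  have hnn : Nonempty (Fin n) := ⟨⟨0, hn⟩⟩
  obtain ⟨S₀, hS₀sub, hS₀card⟩ := Finset.exists_subset_card_eq hu₀2
  have hne : Nonempty {S : Finset (Fin n) // S ⊆ Γ ∧ S.card = u₀} :=
    ⟨⟨S₀, hS₀sub, hS₀card⟩⟩
  have hbdd : BddAbove (Set.range fun S : {S : Finset (Fin n) // S ⊆ Γ ∧ S.card = u₀} =>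
      ∑ i ∈ (S : Finset (Fin n)), h i) := Set.Finite.bddAbove (Set.finite_range _)
  have hbddb : BddBelow (Set.range fun j : Fin n =>
      ((u₀ : ℝ) * h j + ∑ i ∈ Γ, max 0 (h i - h j))) :=
    Set.Finite.bddBelow (Set.finite_range _)
  apply le_antisymm
  · -- choose maximizing subset
    set T := Γ.powerset.filter (fun S => S.card = u₀) with hT
    have hTne : T.Nonempty := ⟨S₀, by
      simp [hT, Finset.mem_filter, Finset.mem_powerset, hS₀sub, hS₀card]⟩
    obtain ⟨Sm, hSmT, hSmmax⟩ := T.exists_max_image (fun S => ∑ i ∈ S, h i) hTne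
    have hSmsub : Sm ⊆ Γ := Finset.mem_powerset.mp (Finset.mem_filter.mp hSmT).1
    have hSmcard : Sm.card = u₀ := (Finset.mem_filter.mp hSmT).2
    have hSmne : Sm.Nonempty := Finset.card_pos.mp (by omega)
    obtain ⟨j, hjSm, hjmin⟩ := Sm.exists_min_image h hSmne
    have hout : ∀ i ∈ Γ, i ∉ Sm → h i ≤ h j := by
      intro i hiΓ hiSm
      have hiej : i ∉ Sm.erase j := fun hc => hiSm (Finset.mem_of_mem_erase hc)
      have hS' : insert i (Sm.erase j) ∈ T := by
        refine Finset.mem_filter.mpr ⟨Finset.mem_powerset.mpr ?_, ?_⟩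
        · intro x hx
          rcases Finset.mem_insert.mp hx with rfl | hx
          · exact hiΓ
          · exact hSmsub (Finset.mem_of_mem_erase hx)
        · rw [Finset.card_insert_of_notMem hiej,
            Finset.card_erase_of_mem hjSm, hSmcard]
          omega
      have hle := hSmmax _ hS'
      rw [Finset.sum_insert hiej, Finset.sum_erase_eq_sub hjSm] at hle
      linarith
    have hsplit : ∑ i ∈ Γ, max 0 (h i - h j) = ∑ i ∈ Sm, (h i - h j) := by
      rw [← Finset.sum_subset hSmsub (fun i hiΓ hiSm => by
        have : h i ≤ h j := hout i hiΓ hiSm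
        simp [max_eq_left, sub_nonpos.mpr this])]
      exact Finset.sum_congr rfl (fun i hi => by
        have : h j ≤ h i := hjmin i hi
        simp [max_eq_right, sub_nonneg.mpr this])
    have hval : (u₀ : ℝ) * h j + ∑ i ∈ Γ, max 0 (h i - h j) = ∑ i ∈ Sm, h i := by
      rw [hsplit, Finset.sum_sub_distrib, Finset.sum_const, hSmcard, nsmul_eq_mul]
      ring
    refine (ciInf_le hbddb j).trans ?_
    rw [hval]
    exact le_ciSup hbdd ⟨Sm, hSmsub, hSmcard⟩
  · refine ciSup_le fun S => le_ciInf fun j => ?_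
    obtain ⟨S, hSsub, hScard⟩ := S
    simp only
    have h1 : ∑ i ∈ S, h i = (u₀ : ℝ) * h j + ∑ i ∈ S, (h i - h j) := by
      rw [Finset.sum_sub_distrib, Finset.sum_const, hScard, nsmul_eq_mul]
      ring
    have h2 : ∑ i ∈ S, (h i - h j) ≤ ∑ i ∈ S, max 0 (h i - h j) :=
      Finset.sum_le_sum (fun i _ => le_max_right _ _)
    have h3 : ∑ i ∈ S, max 0 (h i - h j) ≤ ∑ i ∈ Γ, max 0 (h i - h j) :=
      Finset.sum_le_sum_of_subset_of_nonneg hSsub (fun i _ _ => le_max_left _ _)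
    linarith
end

section
/- Let n ≥ 1 and q ∈ ℝⁿ with 1 > q₁ ≥ q₂ ≥ … ≥ qₙ ≥ 0, and let f : ℤⁿ → ℝ be f(x) = max(0, max_{i} (qᵢ − xᵢ)). Let K ⊆ {1,…,n} be nonempty with elements k₁ < k₂ < … < k_m (so q_{k₁} ≥ … ≥ q_{k_m}), and set q_{k_{m+1}} = 0. Define p ∈ ℤⁿ by pᵢ = 0 for i ∈ K and pᵢ = 1 for i ∉ K, and let p^k = p + Σ_{j=1}^k e_j for k = 0,…,n (the identity permutation). Then for every x ∈ ℝⁿ, f(p⁰) + Σ_{i=1}^n [ f(pⁱ) − f(pⁱ⁻¹) ]·(xᵢ − pᵢ) = Σ_{t=1}^{m} (q_{k_t} − q_{k_{t+1}})·(1 − x_{k_t}). That is, the SEPI for f associated with this p and the natural ordering coincides with the mixing inequality w ≥ Σ_{t=1}^{m} (q_{k_t} − q_{k_{t+1}})·(1 − x_{k_t}) for the general integer mixing set. -/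
/-- For the general integer mixing set function
`f(x) = max(0, max_i (qᵢ − xᵢ))` with `1 > q₁ ≥ … ≥ qₙ ≥ 0`, a nonempty
`K ⊆ {1,…,n}` with elements `k₁ < … < k_m` (enumerated by the strictly monotone
`k : Fin m → Fin n` with range `K`, and with the convention `q_{k_{m+1}} = 0`),
the SEPI associated with `p` (`pᵢ = 0` for `i ∈ K`, `pᵢ = 1` otherwise) and the
natural ordering coincides, as an affine function of `x ∈ ℝⁿ`, with the mixing
inequality `Σ_t (q_{k_t} − q_{k_{t+1}})·(1 − x_{k_t})`. -/
theorem stmt_19 (n : ℕ) (hn : 1 ≤ n) (q : Fin n → ℝ)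
    (hq1 : ∀ i, q i < 1) (hq0 : ∀ i, 0 ≤ q i)
    (hqmono : ∀ i j : Fin n, i ≤ j → q j ≤ q i)
    (f : (Fin n → ℤ) → ℝ)
    (hf : ∀ x : Fin n → ℤ, f x = max 0 (⨆ i, (q i - (x i : ℝ))))
    (K : Finset (Fin n)) (hK : K.Nonempty)
    (m : ℕ) (hm : m = K.card)
    (k : Fin m → Fin n) (hkmono : StrictMono k)
    (hkrange : ∀ j : Fin n, j ∈ K ↔ ∃ t : Fin m, k t = j)
    (p : Fin n → ℤ) (hp : ∀ i, p i = if i ∈ K then 0 else 1)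
    (P : ℕ → Fin n → ℤ)
    (hP : ∀ c i, P c i = p i + if (i : ℕ) < c then 1 else 0) :
    ∀ x : Fin n → ℝ,
      f (P 0) + ∑ i : Fin n,
          (f (P ((i : ℕ) + 1)) - f (P (i : ℕ))) * (x i - (p i : ℝ))
        = ∑ t : Fin m,
            (q (k t) - if h : (t : ℕ) + 1 < m then q (k ⟨(t : ℕ) + 1, h⟩) else 0)
              * (1 - x (k t)) := by
  intro x
  have hne : Nonempty (Fin n) := ⟨⟨0, hn⟩⟩
  have hm0 : 0 < m := by rw [hm]; exact Finset.card_pos.mpr hK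
  set g : ℕ → ℝ := fun c => ⨆ i : Fin n, (if i ∈ K ∧ c ≤ (i : ℕ) then q i else 0) with hg
  have hbdd : ∀ c, BddAbove (Set.range fun i : Fin n =>
      (if i ∈ K ∧ c ≤ (i : ℕ) then q i else 0)) := fun c => Finite.bddAbove_range _
  -- value of P
  have hPval0 : ∀ (c : ℕ) (i : Fin n), i ∈ K → c ≤ (i : ℕ) → P c i = 0 := by
    intro c i h1 h2
    rw [hP, hp, if_pos h1, if_neg (by omega)]
    ring
  have hPval1 : ∀ (c : ℕ) (i : Fin n), ¬(i ∈ K ∧ c ≤ (i : ℕ)) → (1 : ℤ) ≤ P c i := by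
    intro c i hi
    rw [hP, hp]
    by_cases h1 : i ∈ K
    · have h2 : (i : ℕ) < c := by
        rcases not_and_or.mp hi with h | h
        · exact absurd h1 h
        · omega
      rw [if_pos h1, if_pos h2]; norm_num
    · rw [if_neg h1]; split <;> omega
  -- f (P c) = g c
  have hfg : ∀ c, f (P c) = g c := by
    intro c
    rw [hf, hg]
    apply le_antisymm
    · apply max_le
      · refine le_trans ?_ (le_ciSup (hbdd c) (⟨0, hn⟩ : Fin n))
        split
        · exact hq0 _
        · exact le_refl 0
      · apply ciSup_le
        intro i
        refine le_trans ?_ (le_ciSup (hbdd c) i)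
        by_cases hi : i ∈ K ∧ c ≤ (i : ℕ)
        · rw [if_pos hi, hPval0 c i hi.1 hi.2]
          norm_num
        · rw [if_neg hi]
          have h1 : (1 : ℝ) ≤ (P c i : ℝ) := by exact_mod_cast hPval1 c i hi
          linarith [hq1 i]
    · apply ciSup_le
      intro i
      by_cases hi : i ∈ K ∧ c ≤ (i : ℕ)
      · rw [if_pos hi]
        refine le_trans ?_ (le_max_right _ _)
        refine le_trans ?_ (le_ciSup (Finite.bddAbove_range _) i)
        rw [hPval0 c i hi.1 hi.2]
        norm_num
      · rw [if_neg hi]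
        exact le_max_left _ _
  -- generic sup computations
  have hsup_eq : ∀ (c : ℕ) (t : Fin m), c ≤ (k t : ℕ) →
      (∀ s : Fin m, c ≤ (k s : ℕ) → t ≤ s) → g c = q (k t) := by
    intro c t hct hmin
    rw [hg]
    apply le_antisymm
    · apply ciSup_le
      intro j
      by_cases hj : j ∈ K ∧ c ≤ (j : ℕ)
      · rw [if_pos hj]
        obtain ⟨s, hs⟩ := (hkrange j).mp hj.1
        have hts : t ≤ s := hmin s (by rw [hs]; exact hj.2)
        have : k t ≤ k s := hkmono.monotone hts
        rw [← hs]
        exact hqmono _ _ this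
      · rw [if_neg hj]; exact hq0 _
    · refine le_trans ?_ (le_ciSup (hbdd c) (k t))
      rw [if_pos ⟨(hkrange _).mpr ⟨t, rfl⟩, hct⟩]
  have hsup_zero : ∀ c : ℕ, (∀ s : Fin m, ¬ c ≤ (k s : ℕ)) → g c = 0 := by
    intro c hc
    have hall : ∀ j : Fin n, (if j ∈ K ∧ c ≤ (j : ℕ) then q j else 0) = 0 := by
      intro j
      rw [if_neg]
      rintro ⟨hjK, hcj⟩
      obtain ⟨s, rfl⟩ := (hkrange j).mp hjK
      exact hc s hcj
    rw [hg]
    simp only [hall]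
    exact ciSup_const
  -- the abstract q-sequence
  set Q : ℕ → ℝ := fun t => if h : t < m then q (k ⟨t, h⟩) else 0 with hQ
  have hgk : ∀ t : Fin m, g (k t) = Q (t : ℕ) := by
    intro t
    rw [hQ]
    simp only [t.2, dif_pos, Fin.eta]
    exact hsup_eq _ t le_rfl (fun s hs => hkmono.le_iff_le.mp hs)
  have hgk1 : ∀ t : Fin m, g ((k t : ℕ) + 1) = Q ((t : ℕ) + 1) := by
    intro t
    simp only [hQ]
    by_cases h : (t : ℕ) + 1 < m
    · rw [dif_pos h]
      refine hsup_eq _ ⟨(t : ℕ) + 1, h⟩ ?_ ?_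
      · have : k t < k ⟨(t : ℕ) + 1, h⟩ := hkmono (by simp [Fin.lt_def])
        exact this
      · intro s hs
        have : k t < k s := by
          have : ((k t : ℕ)) < (k s : ℕ) := by omega
          exact this
        have hts : t < s := hkmono.lt_iff_lt.mp this
        simp only [Fin.le_def]
        omega
    · rw [dif_neg h]
      apply hsup_zero
      intro s hs
      have : k t < k s := by
        have : ((k t : ℕ)) < (k s : ℕ) := by omega
        exact this
      have hts : t < s := hkmono.lt_iff_lt.mp this
      omega
  have hg0 : g 0 = Q 0 := by
    simp only [hQ]
    rw [dif_pos hm0]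
    exact hsup_eq 0 ⟨0, hm0⟩ (Nat.zero_le _) (fun s _ => by simp [Fin.le_def])
  -- off-K terms vanish
  have hoffK : ∀ i : Fin n, i ∉ K → g ((i : ℕ) + 1) = g (i : ℕ) := by
    intro i hi
    have hcond : ∀ j : Fin n,
        ((j ∈ K ∧ (i : ℕ) + 1 ≤ (j : ℕ)) ↔ (j ∈ K ∧ (i : ℕ) ≤ (j : ℕ))) := by
      intro j
      constructor
      · rintro ⟨h1, h2⟩; exact ⟨h1, by omega⟩
      · rintro ⟨h1, h2⟩
        refine ⟨h1, ?_⟩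
        have hne' : j ≠ i := fun h => hi (h ▸ h1)
        have : (j : ℕ) ≠ (i : ℕ) := fun h => hne' (Fin.ext h)
        omega
    simp only [hg]
    exact congrArg _ (funext fun j => if_congr (hcond j) rfl rfl)
  -- rewrite LHS sum over K
  have hsum1 : ∑ i : Fin n, (f (P ((i : ℕ) + 1)) - f (P (i : ℕ))) * (x i - (p i : ℝ))
      = ∑ i ∈ K, (g ((i : ℕ) + 1) - g (i : ℕ)) * (x i - (p i : ℝ)) := by
    have h1 : ∑ i : Fin n, (f (P ((i : ℕ) + 1)) - f (P (i : ℕ))) * (x i - (p i : ℝ))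
        = ∑ i : Fin n, (g ((i : ℕ) + 1) - g (i : ℕ)) * (x i - (p i : ℝ)) :=
      Finset.sum_congr rfl (fun i _ => by rw [hfg, hfg])
    rw [h1]
    refine (Finset.sum_subset (Finset.subset_univ K) ?_).symm
    intro i _ hi
    rw [hoffK i hi]
    ring
  have hsum2 : ∑ i ∈ K, (g ((i : ℕ) + 1) - g (i : ℕ)) * (x i - (p i : ℝ))
      = ∑ t : Fin m, (Q ((t : ℕ) + 1) - Q (t : ℕ)) * x (k t) := by
    refine (Finset.sum_bij (fun (t : Fin m) (_ : t ∈ Finset.univ) => k t) ?_ ?_ ?_ ?_).symm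
    · exact fun t _ => (hkrange _).mpr ⟨t, rfl⟩
    · exact fun t₁ _ t₂ _ h => hkmono.injective h
    · intro j hj
      obtain ⟨t, ht⟩ := (hkrange j).mp hj
      exact ⟨t, Finset.mem_univ t, ht⟩
    · intro t _
      rw [hgk, hgk1, hp, if_pos ((hkrange _).mpr ⟨t, rfl⟩)]
      push_cast
      ring
  -- telescoping
  have htel : ∑ t : Fin m, (Q (t : ℕ) - Q ((t : ℕ) + 1)) = Q 0 := by
    rw [Fin.sum_univ_eq_sum_range (fun t => Q t - Q (t + 1)), Finset.sum_range_sub']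
    simp [hQ]
  -- identify RHS terms with Q
  have hrhs : ∀ t : Fin m,
      (q (k t) - if h : (t : ℕ) + 1 < m then q (k ⟨(t : ℕ) + 1, h⟩) else 0)
        = Q (t : ℕ) - Q ((t : ℕ) + 1) := by
    intro t
    simp only [hQ]
    simp only [t.2, dif_pos, Fin.eta]
  calc f (P 0) + ∑ i : Fin n, (f (P ((i : ℕ) + 1)) - f (P (i : ℕ))) * (x i - (p i : ℝ))
      = Q 0 + ∑ t : Fin m, (Q ((t : ℕ) + 1) - Q (t : ℕ)) * x (k t) := by
        rw [hfg, hg0, hsum1, hsum2]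
    _ = ∑ t : Fin m, (Q (t : ℕ) - Q ((t : ℕ) + 1))
          + ∑ t : Fin m, (Q ((t : ℕ) + 1) - Q (t : ℕ)) * x (k t) := by rw [htel]
    _ = ∑ t : Fin m, ((Q (t : ℕ) - Q ((t : ℕ) + 1)) * (1 - x (k t))) := by
        rw [← Finset.sum_add_distrib]
        exact Finset.sum_congr rfl (fun t _ => by ring)
    _ = _ := Finset.sum_congr rfl (fun t _ => by rw [hrhs])
end
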